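/- arXiv:math/0603154 — 4 statements merged into one kernel-verified Lean document; each statement's English description precedes it below -/
import Mathlib

section
/- Let G := {x ∈ (ZMod 2)^{ℤ×ℤ} : x_{i,j} + x_{i+1,j} + x_{i,j+1} = 0 for all (i,j)} with its normalized Haar probability measure μ. Define the regions R1 := {(i,j) : i < 0, 0 < j < −i}, R2 := {(i,j) : j < 0, 0 < i < −j}, R3 := {(i,j) : i > 0, j > 0}. Then, under μ, the three families of coordinates (x_u)_{u∈R1}, (x_u)_{u∈R2}, (x_u)_{u∈R3} are mutually independent. -/
open MeasureTheory Filter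
open scoped ENNReal

/-- The 3-dot rule defining Ledrappier's group
`G = {x ∈ (ZMod 2)^{ℤ×ℤ} : x_{i,j} + x_{i+1,j} + x_{i,j+1} = 0 for all (i,j)}`. -/
def ThreeDotConfig (x : ℤ × ℤ → ZMod 2) : Prop :=
  ∀ i j : ℤ, x (i, j) + x (i + 1, j) + x (i, j + 1) = 0

/-- `μ` is the normalized Haar probability measure of the closed subgroup `G` of the
compact abelian group `(ZMod 2)^{ℤ×ℤ}`, viewed as a measure on the ambient product
space: it is the unique probability measure carried by `G` and invariant under
translation by every element of `G`. -/
def IsHaarOnThreeDot (μ : Measure ((ℤ × ℤ) → ZMod 2)) : Prop :=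
  IsProbabilityMeasure μ ∧ μ {x | ThreeDotConfig x} = 1 ∧
    ∀ g : (ℤ × ℤ) → ZMod 2, ThreeDotConfig g → μ.map (fun x => x + g) = μ

/-- The pattern of `x` on the size-`ℓ` square window based at `v`, namely the finite
configuration `(x_{v + u})_{u ∈ {0,…,ℓ}²}`. -/
def squarePattern (ℓ : ℕ) (v : ℤ × ℤ) (x : ℤ × ℤ → ZMod 2) :
    Fin (ℓ + 1) × Fin (ℓ + 1) → ZMod 2 :=
  fun u => x (v.1 + (u.1 : ℕ), v.2 + (u.2 : ℕ))

open ProbabilityTheory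

/-- The σ-algebra generated by the family of coordinates `(x_u)_{u ∈ R}`. -/
def coordsAlg (R : Set (ℤ × ℤ)) : MeasurableSpace ((ℤ × ℤ) → ZMod 2) :=
  ⨆ u ∈ R, MeasurableSpace.comap (fun x : (ℤ × ℤ) → ZMod 2 => x u) inferInstance

/-- The three regions of the plane used in the proof that Ledrappier's 3-dot system is
2-fold mixing: `R1 = {i < 0, 0 < j < −i}`, `R2 = {j < 0, 0 < i < −j}`,
`R3 = {i > 0, j > 0}`. -/
def ledrappierRegion : Fin 3 → Set (ℤ × ℤ)
  | 0 => {u | u.1 < 0 ∧ 0 < u.2 ∧ u.2 < -u.1}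
  | 1 => {u | u.2 < 0 ∧ 0 < u.1 ∧ u.1 < -u.2}
  | 2 => {u | 0 < u.1 ∧ 0 < u.2}

namespace ThreeDotAux


lemma zmod2_add_self (a : ZMod 2) : a + a = 0 := by
  have : ∀ a : ZMod 2, a + a = 0 := by decide
  exact this a

lemma zmod2_cancel {a b c : ZMod 2} (h : a + b + c = 0) : c = a + b := by
  revert h; revert a b c; decide

lemma tdc_up {x : ℤ × ℤ → ZMod 2} (hx : ThreeDotConfig x) (i j : ℤ) :
    x (i, j + 1) = x (i, j) + x (i + 1, j) := zmod2_cancel (hx i j)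

lemma tdc_right {x : ℤ × ℤ → ZMod 2} (hx : ThreeDotConfig x) (i j : ℤ) :
    x (i + 1, j) = x (i, j) + x (i, j + 1) := by
  have := hx i j
  revert this
  generalize x (i,j) = a; generalize x (i+1,j) = b; generalize x (i,j+1) = c
  revert a b c; decide

lemma tdc_zero : ThreeDotConfig 0 := by intro i j; simp

lemma tdc_add {x y : ℤ × ℤ → ZMod 2} (hx : ThreeDotConfig x) (hy : ThreeDotConfig y) :
    ThreeDotConfig (x + y) := by
  intro i j
  have h1 := hx i j; have h2 := hy i j
  simp only [Pi.add_apply]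
  revert h1 h2
  generalize x (i,j) = a; generalize x (i+1,j) = b; generalize x (i,j+1) = c
  generalize y (i,j) = d; generalize y (i+1,j) = e; generalize y (i,j+1) = f
  revert a b c d e f; decide

lemma tdc_transpose {x : ℤ × ℤ → ZMod 2} (hx : ThreeDotConfig x) :
    ThreeDotConfig (fun u => x (u.2, u.1)) := by
  intro i j
  have := hx j i
  simpa [add_comm (x (j+1, i)), add_assoc, add_left_comm] using this

/-- Upward determination on a right quadrant: if two configs agree on
`{(i,1) : i ≥ 1}` they agree on `{(i,j) : i ≥ 1, j ≥ 1}`. -/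
lemma det_quadrant {x y : ℤ × ℤ → ZMod 2} (hx : ThreeDotConfig x) (hy : ThreeDotConfig y)
    (h : ∀ i : ℤ, 1 ≤ i → x (i, 1) = y (i, 1)) :
    ∀ j : ℤ, 1 ≤ j → ∀ i : ℤ, 1 ≤ i → x (i, j) = y (i, j) := by
  suffices H : ∀ n : ℕ, ∀ i : ℤ, 1 ≤ i → x (i, 1 + (n : ℤ)) = y (i, 1 + (n : ℤ)) by
    intro j hj i hi
    obtain ⟨n, rfl⟩ : ∃ n : ℕ, j = 1 + (n : ℤ) := ⟨(j - 1).toNat, by omega⟩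
    exact H n i hi
  intro n
  induction n with
  | zero => simpa using h
  | succ n ih =>
    intro i hi
    have e : 1 + ((n : ℤ) + 1) = (1 + (n : ℤ)) + 1 := by ring
    push_cast
    rw [e, tdc_up hx, tdc_up hy, ih i hi, ih (i + 1) (by omega)]

/-- Upward determination on a left triangle: if two configs agree on
`{(i,1) : i ≤ -2}` they agree on `{(i,j) : j ≥ 1, i + j ≤ -1}`. -/
lemma det_triangle {x y : ℤ × ℤ → ZMod 2} (hx : ThreeDotConfig x) (hy : ThreeDotConfig y)
    (h : ∀ i : ℤ, i ≤ -2 → x (i, 1) = y (i, 1)) :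
    ∀ j : ℤ, 1 ≤ j → ∀ i : ℤ, i + j ≤ -1 → x (i, j) = y (i, j) := by
  suffices H : ∀ n : ℕ, ∀ i : ℤ, i + (1 + (n : ℤ)) ≤ -1 → x (i, 1 + (n : ℤ)) = y (i, 1 + (n : ℤ)) by
    intro j hj i hi
    obtain ⟨n, rfl⟩ : ∃ n : ℕ, j = 1 + (n : ℤ) := ⟨(j - 1).toNat, by omega⟩
    exact H n i hi
  intro n
  induction n with
  | zero => intro i hi; exact h i (by omega)
  | succ n ih =>
    intro i hi
    have e : 1 + ((n : ℤ) + 1) = (1 + (n : ℤ)) + 1 := by ring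
    push_cast at hi ⊢
    rw [e, tdc_up hx, tdc_up hy, ih i (by omega), ih (i + 1) (by omega)]

/-- Downward determination on the lower triangle: if two configs agree on
`{(1,j) : j ≤ -2}` they agree on `{(i,j) : i ≥ 1, i + j ≤ -1}`. -/
lemma det_lowtriangle {x y : ℤ × ℤ → ZMod 2} (hx : ThreeDotConfig x) (hy : ThreeDotConfig y)
    (h : ∀ j : ℤ, j ≤ -2 → x (1, j) = y (1, j)) :
    ∀ i : ℤ, 1 ≤ i → ∀ j : ℤ, i + j ≤ -1 → x (i, j) = y (i, j) := by
  have := det_triangle (tdc_transpose hx) (tdc_transpose hy) (fun i hi => h i hi)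
  intro i hi j hj
  exact this i hi j (by omega)

/-- "Partial sum" of `t` from `0` to `i` (over `ZMod 2`, where signs don't matter). -/
def psum (t : ℤ → ZMod 2) (i : ℤ) : ZMod 2 :=
  if 0 ≤ i then ∑ k ∈ Finset.range i.toNat, t k
  else ∑ k ∈ Finset.range (-i).toNat, t (i + k)


lemma psum_zero (t : ℤ → ZMod 2) : psum t 0 = 0 := by simp [psum]

lemma psum_succ (t : ℤ → ZMod 2) (i : ℤ) : psum t (i + 1) = psum t i + t i := by
  rcases le_or_gt 0 i with hi | hi
  · have h1 : 0 ≤ i + 1 := by omega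
    have h2 : (i + 1).toNat = i.toNat + 1 := by omega
    simp only [psum, if_pos hi, if_pos h1, h2, Finset.sum_range_succ]
    congr 2
    omega
  · rcases eq_or_lt_of_le (by omega : i + 1 ≤ 0) with h | h
    · have hi1 : i = -1 := by omega
      subst hi1
      have e0 : (-1 : ℤ) + 1 = 0 := by norm_num
      have e1 : psum t (-1) = t (-1) := by
        simp [psum, Finset.sum_range_one]
      rw [e0, psum_zero, e1]
      exact (zmod2_add_self _).symm
    · have h1 : ¬ 0 ≤ i + 1 := by omega
      have h2 : ¬ 0 ≤ i := by omega
      simp only [psum, if_neg h1, if_neg h2]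
      have h3 : (-i).toNat = (-(i+1)).toNat + 1 := by omega
      rw [h3, Finset.sum_range_succ']
      have e1 : ∀ k ∈ Finset.range (-(i+1)).toNat, t (i + (↑(k + 1) : ℤ)) = t ((i+1) + k) := by
        intro k _; congr 1; push_cast; ring
      rw [Finset.sum_congr rfl e1]
      simp only [Nat.cast_zero, add_zero]
      rw [add_assoc, zmod2_add_self, add_zero]

/-- Rows above row 0, generated by the Pascal rule. -/
def fwd (r : ℤ → ZMod 2) : ℕ → ℤ → ZMod 2
  | 0 => r
  | n + 1 => fun i => fwd r n i + fwd r n (i + 1)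

/-- Rows below row 0, generated with seed value `0` in column 0. -/
def bwd (r : ℤ → ZMod 2) : ℕ → ℤ → ZMod 2
  | 0 => r
  | n + 1 => psum (bwd r n)

/-- The configuration built from row 0 equal to `r`, with column-0 seeds `0` below. -/
def build (r : ℤ → ZMod 2) : ℤ × ℤ → ZMod 2 :=
  fun u => if 0 ≤ u.2 then fwd r u.2.toNat u.1 else bwd r (-u.2).toNat u.1

lemma build_nonneg (r : ℤ → ZMod 2) (i j : ℤ) (hj : 0 ≤ j) :
    build r (i, j) = fwd r j.toNat i := if_pos hj

lemma build_neg (r : ℤ → ZMod 2) (i j : ℤ) (hj : j < 0) :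
    build r (i, j) = bwd r (-j).toNat i := if_neg (by omega)

lemma build_tdc (r : ℤ → ZMod 2) : ThreeDotConfig (build r) := by
  intro i j
  have key : ∀ a b c : ZMod 2, c = a + b → a + b + c = 0 := by decide
  rcases le_or_gt 0 j with hj | hj
  · rw [build_nonneg r i j hj, build_nonneg r (i+1) j hj,
      build_nonneg r i (j+1) (by omega)]
    have : (j + 1).toNat = j.toNat + 1 := by omega
    rw [this]
    exact key _ _ _ rfl
  · rcases eq_or_lt_of_le (by omega : j + 1 ≤ 0) with h | h
    · have hj1 : j = -1 := by omega
      subst hj1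
      rw [build_neg r i _ (by norm_num), build_neg r (i+1) _ (by norm_num),
        show (-1 : ℤ) + 1 = 0 from by norm_num, build_nonneg r i 0 le_rfl]
      have e : ((1 : ℤ)).toNat = 1 := rfl
      rw [show (-(-1) : ℤ) = 1 from by norm_num, e]
      show bwd r 1 i + bwd r 1 (i+1) + bwd r 0 i = 0
      have : bwd r 1 (i + 1) = bwd r 1 i + bwd r 0 i := psum_succ _ i
      rw [this]
      generalize bwd r 1 i = a; generalize bwd r 0 i = b
      revert a b; decide
    · rw [build_neg r i j hj, build_neg r (i+1) j hj, build_neg r i (j+1) (by omega)]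
      have e : (-j).toNat = (-(j+1)).toNat + 1 := by omega
      rw [e]
      show bwd r ((-(j+1)).toNat + 1) i + bwd r ((-(j+1)).toNat + 1) (i+1)
          + bwd r (-(j+1)).toNat i = 0
      have : bwd r ((-(j+1)).toNat + 1) (i + 1)
          = bwd r ((-(j+1)).toNat + 1) i + bwd r (-(j+1)).toNat i := psum_succ _ i
      rw [this]
      generalize bwd r ((-(j+1)).toNat + 1) i = a; generalize bwd r (-(j+1)).toNat i = b
      revert a b; decide

lemma build_row0 (r : ℤ → ZMod 2) (i : ℤ) : build r (i, 0) = r i := by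
  rw [build_nonneg r i 0 le_rfl]; rfl

lemma build_row1 (r : ℤ → ZMod 2) (i : ℤ) : build r (i, 1) = r i + r (i + 1) := by
  rw [build_nonneg r i 1 (by norm_num)]; rfl

/-- Column 0 is zero below row 0. -/
lemma build_col0 (r : ℤ → ZMod 2) (j : ℤ) (hj : j < 0) : build r (0, j) = 0 := by
  rw [build_neg r 0 j hj]
  have : ∃ n : ℕ, (-j).toNat = n + 1 := ⟨(-j).toNat - 1, by omega⟩
  obtain ⟨n, hn⟩ := this
  rw [hn]
  exact psum_zero _

/-- Column 1 is zero below row -1. -/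
lemma build_col1 (r : ℤ → ZMod 2) (j : ℤ) (hj : j ≤ -2) : build r (1, j) = 0 := by
  have h0 := build_tdc r 0 j
  have h1 : build r (0, j) = 0 := build_col0 r j (by omega)
  have h2 : build r (0, j + 1) = 0 := build_col0 r (j+1) (by omega)
  rw [show (0 : ℤ) + 1 = 1 from rfl, h1, h2] at h0
  simpa using h0

/-- Region 1 (upper-left triangle), in inequality normal form. -/
def R1' (u : ℤ × ℤ) : Prop := 1 ≤ u.2 ∧ u.1 + u.2 ≤ -1
/-- Region 2 (lower-right triangle). -/
def R2' (u : ℤ × ℤ) : Prop := 1 ≤ u.1 ∧ u.1 + u.2 ≤ -1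
/-- Region 3 (open positive quadrant). -/
def R3' (u : ℤ × ℤ) : Prop := 1 ≤ u.1 ∧ 1 ≤ u.2

/-- Claim A: any configuration can be modified to keep its values on `R3` while
vanishing on `R1 ∪ R2`. -/
theorem claimA {x : ℤ × ℤ → ZMod 2} (hx : ThreeDotConfig x) :
    ∃ y, ThreeDotConfig y ∧ (∀ u, R3' u → y u = x u) ∧
      (∀ u, R1' u → y u = 0) ∧ (∀ u, R2' u → y u = 0) := by
  set r : ℤ → ZMod 2 :=
    fun i => if i ≤ 0 then 0 else ∑ k ∈ Finset.range i.toNat, x (k, 1) with hr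
  refine ⟨build r, build_tdc r, ?_, ?_, ?_⟩
  · -- agrees with x on the quadrant
    intro u hu
    obtain ⟨i, j⟩ := u
    have h1 : ∀ i : ℤ, 1 ≤ i → build r (i, 1) = x (i, 1) := by
      intro i hi
      rw [build_row1]
      have e1 : r i = ∑ k ∈ Finset.range i.toNat, x (k, 1) := by
        simp only [hr]
        rw [if_neg (show ¬ i ≤ 0 by omega)]
      have e2 : r (i + 1) = ∑ k ∈ Finset.range (i.toNat + 1), x (k, 1) := by
        simp only [hr]
        rw [if_neg (show ¬ i + 1 ≤ 0 by omega),
          show (i + 1).toNat = i.toNat + 1 from by omega]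
      rw [e1, e2, Finset.sum_range_succ, ← add_assoc, zmod2_add_self, zero_add,
        show ((i.toNat : ℤ)) = i from by omega]
    exact det_quadrant (build_tdc r) hx h1 j hu.2 i hu.1
  · intro u hu
    obtain ⟨i, j⟩ := u
    have h1 : ∀ i : ℤ, i ≤ -2 → build r (i, 1) = (0 : ℤ × ℤ → ZMod 2) (i, 1) := by
      intro i hi
      rw [build_row1]
      simp only [hr]
      rw [if_pos (show i ≤ 0 by omega), if_pos (show i + 1 ≤ 0 by omega)]
      simp
    exact det_triangle (build_tdc r) tdc_zero h1 j hu.1 i hu.2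
  · intro u hu
    obtain ⟨i, j⟩ := u
    have h1 : ∀ j : ℤ, j ≤ -2 → build r (1, j) = (0 : ℤ × ℤ → ZMod 2) (1, j) := by
      intro j hj; rw [build_col1 r j hj]; simp
    exact det_lowtriangle (build_tdc r) tdc_zero h1 i hu.1 j hu.2

/-- Claim B: keep values on `R1`, vanish on `R2 ∪ R3`. -/
theorem claimB {x : ℤ × ℤ → ZMod 2} (hx : ThreeDotConfig x) :
    ∃ y, ThreeDotConfig y ∧ (∀ u, R1' u → y u = x u) ∧
      (∀ u, R2' u → y u = 0) ∧ (∀ u, R3' u → y u = 0) := by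
  set r : ℤ → ZMod 2 :=
    fun i => if -1 ≤ i then 0 else ∑ k ∈ Finset.range (-1 - i).toNat, x (-2 - k, 1) with hr
  refine ⟨build r, build_tdc r, ?_, ?_, ?_⟩
  · intro u hu
    obtain ⟨i, j⟩ := u
    have h1 : ∀ i : ℤ, i ≤ -2 → build r (i, 1) = x (i, 1) := by
      intro i hi
      rw [build_row1]
      have e1 : r i = ∑ k ∈ Finset.range ((-2 - i).toNat + 1), x (-2 - k, 1) := by
        simp only [hr]
        rw [if_neg (show ¬ -1 ≤ i by omega),
          show (-1 - i).toNat = (-2 - i).toNat + 1 from by omega]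
      have e2 : r (i + 1) = ∑ k ∈ Finset.range (-2 - i).toNat, x (-2 - k, 1) := by
        simp only [hr]
        rcases eq_or_lt_of_le hi with h | h
        · rw [if_pos (show -1 ≤ i + 1 by omega),
            show (-2 - i).toNat = 0 from by omega]
          simp
        · rw [if_neg (show ¬ -1 ≤ i + 1 by omega),
            show (-1 - (i + 1)).toNat = (-2 - i).toNat from by omega]
      rw [e1, e2, Finset.sum_range_succ, add_comm (∑ k ∈ Finset.range (-2-i).toNat, x (-2-k,1)),
        add_assoc, zmod2_add_self, add_zero,
        show (-2 - ((-2 - i).toNat : ℤ)) = i from by omega]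
    exact det_triangle (build_tdc r) hx h1 j hu.1 i hu.2
  · intro u hu
    obtain ⟨i, j⟩ := u
    have h1 : ∀ j : ℤ, j ≤ -2 → build r (1, j) = (0 : ℤ × ℤ → ZMod 2) (1, j) := by
      intro j hj; rw [build_col1 r j hj]; simp
    exact det_lowtriangle (build_tdc r) tdc_zero h1 i hu.1 j hu.2
  · intro u hu
    obtain ⟨i, j⟩ := u
    have h1 : ∀ i : ℤ, 1 ≤ i → build r (i, 1) = (0 : ℤ × ℤ → ZMod 2) (i, 1) := by
      intro i hi
      rw [build_row1]
      simp only [hr]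
      rw [if_pos (show -1 ≤ i by omega), if_pos (show -1 ≤ i + 1 by omega)]
      simp
    exact det_quadrant (build_tdc r) tdc_zero h1 j hu.2 i hu.1

/-- Claim C: keep values on `R2`, vanish on `R1 ∪ R3`. -/
theorem claimC {x : ℤ × ℤ → ZMod 2} (hx : ThreeDotConfig x) :
    ∃ y, ThreeDotConfig y ∧ (∀ u, R2' u → y u = x u) ∧
      (∀ u, R1' u → y u = 0) ∧ (∀ u, R3' u → y u = 0) := by
  obtain ⟨y, hy, h1, h2, h3⟩ := claimB (tdc_transpose hx)
  refine ⟨fun u => y (u.2, u.1), tdc_transpose hy, ?_, ?_, ?_⟩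
  · rintro ⟨i, j⟩ hu
    exact h1 (j, i) ⟨hu.1, by have := hu.2; dsimp at this ⊢; omega⟩
  · rintro ⟨i, j⟩ hu
    exact h2 (j, i) ⟨hu.1, by have := hu.2; dsimp at this ⊢; omega⟩
  · rintro ⟨i, j⟩ hu
    exact h3 (j, i) ⟨hu.2, hu.1⟩

abbrev Ω := (ℤ × ℤ) → ZMod 2

/-- Cylinder set: configurations agreeing with `a` on `F`. -/
def cyl (F : Finset (ℤ × ℤ)) (a : Ω) : Set Ω := {x | ∀ u ∈ F, x u = a u}

lemma meas_cyl (F : Finset (ℤ × ℤ)) (a : Ω) : MeasurableSet (cyl F a) := by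
  have : cyl F a = ⋂ u ∈ F, (fun x : Ω => x u) ⁻¹' {a u} := by
    ext x; simp [cyl]
  rw [this]
  exact Finset.measurableSet_biInter _ fun u _ =>
    (measurable_pi_apply u) (measurableSet_singleton _)

lemma meas_G : MeasurableSet {x : Ω | ThreeDotConfig x} := by
  have : {x : Ω | ThreeDotConfig x} =
      ⋂ (i : ℤ) (j : ℤ),
        (fun x : Ω => x (i, j) + x (i + 1, j) + x (i, j + 1)) ⁻¹' {0} := by
    ext x; simp [ThreeDotConfig, Set.mem_iInter]
  rw [this]
  refine MeasurableSet.iInter fun i => MeasurableSet.iInter fun j => ?_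
  have m : Measurable (fun x : Ω => x (i, j) + x (i + 1, j) + x (i, j + 1)) :=
    (measurable_of_countable (fun p : ZMod 2 × ZMod 2 × ZMod 2 => p.1 + p.2.1 + p.2.2)).comp
      (f := fun x : Ω => (x (i, j), x (i + 1, j), x (i, j + 1)))
      ((measurable_pi_apply (i, j)).prodMk ((measurable_pi_apply (i + 1, j)).prodMk
        (measurable_pi_apply (i, j + 1))))
  exact m (measurableSet_singleton (0 : ZMod 2))

lemma meas_addg (g : Ω) : Measurable (fun x : Ω => x + g) :=
  measurable_pi_lambda _ fun u => (measurable_pi_apply u).add measurable_const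

/-- `a` extends to a three-dot configuration on `F`. -/
def Ext (F : Finset (ℤ × ℤ)) (a : Ω) : Prop :=
  ∃ x, ThreeDotConfig x ∧ ∀ u ∈ F, x u = a u

lemma cyl_congr {F : Finset (ℤ × ℤ)} {a b : Ω} (h : ∀ u ∈ F, a u = b u) :
    cyl F a = cyl F b := by
  ext x; exact forall₂_congr fun u hu => by rw [h u hu]

section Measure
variable {μ : Measure Ω} (hp : IsProbabilityMeasure μ)
  (hG : μ {x | ThreeDotConfig x} = 1)
  (hinv : ∀ g : Ω, ThreeDotConfig g → μ.map (fun x => x + g) = μ)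

include hp hG in
lemma mu_compl_G : μ {x : Ω | ThreeDotConfig x}ᶜ = 0 := by
  rw [measure_compl meas_G (measure_ne_top μ _), hG, measure_univ, tsub_self]

include hp hG in
lemma mu_cyl_of_not_ext {F : Finset (ℤ × ℤ)} {a : Ω} (h : ¬ Ext F a) :
    μ (cyl F a) = 0 := by
  refine le_antisymm ?_ zero_le
  rw [← mu_compl_G hp hG]
  refine measure_mono fun x hx hxG => h ⟨x, hxG, hx⟩

include hinv in
lemma mu_cyl_ext_congr {F : Finset (ℤ × ℤ)} {a b : Ω}
    (ha : Ext F a) (hb : Ext F b) : μ (cyl F a) = μ (cyl F b) := by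
  obtain ⟨xa, hxa, hma⟩ := ha
  obtain ⟨xb, hxb, hmb⟩ := hb
  have hg : ThreeDotConfig (xa + xb) := by
    intro i j
    have h1 := hxa i j; have h2 := hxb i j
    simp only [Pi.add_apply]
    revert h1 h2
    generalize xa (i,j) = a; generalize xa (i+1,j) = b; generalize xa (i,j+1) = c
    generalize xb (i,j) = d; generalize xb (i+1,j) = e; generalize xb (i,j+1) = f
    revert a b c d e f; decide
  set g := xa + xb with hgdef
  have key : (fun x : Ω => x + g) ⁻¹' (cyl F b) = cyl F a := by
    ext x
    simp only [Set.mem_preimage, cyl, Set.mem_setOf_eq, Pi.add_apply]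
    refine forall₂_congr fun u hu => ?_
    have e1 : b u + g u = a u := by
      rw [hgdef]
      simp only [Pi.add_apply]
      rw [hma u hu, hmb u hu]
      generalize a u = p; generalize b u = q
      revert p q; decide
    have fact : ∀ p q r : ZMod 2, (p + q = r) ↔ (p = r + q) := by decide
    rw [fact (x u) (g u) (b u), e1]
  calc μ (cyl F a) = μ ((fun x : Ω => x + g) ⁻¹' (cyl F b)) := by rw [key]
    _ = (μ.map (fun x : Ω => x + g)) (cyl F b) :=
        (Measure.map_apply (meas_addg g) (meas_cyl F b)).symm
    _ = μ (cyl F b) := by rw [hinv g hg]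

/-- extension of a pattern on `F` to the whole plane by `0`. -/
def pext (F : Finset (ℤ × ℤ)) (b : ↥F → ZMod 2) : Ω :=
  fun u => if h : u ∈ F then b ⟨u, h⟩ else 0

/-- The number of patterns on `F` that extend to a three-dot configuration. -/
noncomputable def N (F : Finset (ℤ × ℤ)) : ℕ :=
  Nat.card {b : ↥F → ZMod 2 // Ext F (pext F b)}

include hp in
lemma sum_cyl_patterns (F : Finset (ℤ × ℤ)) :
    ∑ b : ↥F → ZMod 2, μ (cyl F (pext F b)) = 1 := by
  classical
  have hdisj : Pairwise (Function.onFun Disjoint (fun b : ↥F → ZMod 2 => cyl F (pext F b))) := by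
    intro b b' hbb'
    rw [Function.onFun, Set.disjoint_left]
    intro x hx hx'
    apply hbb'
    funext u
    have e1 := hx u.1 u.2
    have e2 := hx' u.1 u.2
    rw [e1] at e2
    simpa [pext, u.2] using e2
  have hcover : (⋃ b : ↥F → ZMod 2, cyl F (pext F b)) = Set.univ := by
    ext x
    simp only [Set.mem_iUnion, Set.mem_univ, iff_true]
    exact ⟨fun u => x u.1, fun u hu => by simp [pext, hu]⟩
  have := measure_iUnion (μ := μ) hdisj (fun b => meas_cyl F _)
  rw [hcover, measure_univ, tsum_fintype] at this
  exact this.symm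

include hp hG hinv in
lemma mu_cyl_of_ext {F : Finset (ℤ × ℤ)} {a : Ω} (h : Ext F a) :
    μ (cyl F a) = ((N F : ℝ≥0∞))⁻¹ := by
  classical
  have key : ∀ b : ↥F → ZMod 2,
      μ (cyl F (pext F b)) = if Ext F (pext F b) then μ (cyl F a) else 0 := by
    intro b
    by_cases hb : Ext F (pext F b)
    · rw [if_pos hb]; exact mu_cyl_ext_congr hinv hb h
    · rw [if_neg hb]; exact mu_cyl_of_not_ext hp hG hb
  have h1 := sum_cyl_patterns hp (μ := μ) F
  rw [Finset.sum_congr rfl (fun b _ => key b)] at h1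
  rw [Finset.sum_ite, Finset.sum_const, Finset.sum_const_zero, add_zero] at h1
  have hcard : (Finset.filter (fun b : ↥F → ZMod 2 => Ext F (pext F b)) Finset.univ).card = N F := by
    rw [N, Nat.card_eq_fintype_card, Fintype.card_subtype]
  rw [hcard, nsmul_eq_mul] at h1
  have hN0 : (N F : ℝ≥0∞) ≠ 0 := by
    intro h0
    rw [h0, zero_mul] at h1
    exact zero_ne_one h1
  have hNt : (N F : ℝ≥0∞) ≠ ⊤ := ENNReal.natCast_ne_top _
  calc μ (cyl F a) = ((N F : ℝ≥0∞)⁻¹ * (N F : ℝ≥0∞)) * μ (cyl F a) := by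
        rw [ENNReal.inv_mul_cancel hN0 hNt, one_mul]
    _ = (N F : ℝ≥0∞)⁻¹ * ((N F : ℝ≥0∞) * μ (cyl F a)) := by rw [mul_assoc]
    _ = (N F : ℝ≥0∞)⁻¹ := by rw [h1, mul_one]

end Measure
/-- `Splits E1 E2` : every configuration can be replaced by one with the same values
on `E1` and vanishing on `E2`. -/
def Splits (E1 E2 : Finset (ℤ × ℤ)) : Prop :=
  ∀ x, ThreeDotConfig x → ∃ y, ThreeDotConfig y ∧
    (∀ u ∈ E1, y u = x u) ∧ (∀ u ∈ E2, y u = 0)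

lemma ext_of_pattern {F : Finset (ℤ × ℤ)} {a : Ω} (h : Ext F a) :
    Ext F (pext F (fun u => a u.1)) := by
  obtain ⟨x, hx, hm⟩ := h
  exact ⟨x, hx, fun u hu => by rw [hm u hu]; simp [pext, hu]⟩

lemma ext_mono {F F' : Finset (ℤ × ℤ)} (hFF : F ⊆ F') {a : Ω} (h : Ext F' a) : Ext F a := by
  obtain ⟨x, hx, hm⟩ := h
  exact ⟨x, hx, fun u hu => hm u (hFF hu)⟩

/-- The key combinatorial bijection: patterns extendable on a disjoint union correspond
to pairs of extendable patterns, provided configurations split across `E1, E2`. -/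
noncomputable def splitEquiv (E1 E2 : Finset (ℤ × ℤ)) (hd : Disjoint E1 E2)
    (h1 : Splits E1 E2) (h2 : Splits E2 E1) :
    {b : ↥(E1 ∪ E2) → ZMod 2 // Ext (E1 ∪ E2) (pext _ b)} ≃
      ({b : ↥E1 → ZMod 2 // Ext E1 (pext _ b)} × {b : ↥E2 → ZMod 2 // Ext E2 (pext _ b)}) where
  toFun b :=
    (⟨fun u => b.1 ⟨u.1, Finset.mem_union_left _ u.2⟩, by
        obtain ⟨x, hx, hm⟩ := b.2
        refine ⟨x, hx, fun u hu => ?_⟩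
        have := hm u (Finset.mem_union_left _ hu)
        simp only [pext, dif_pos (Finset.mem_union_left E2 hu), dif_pos hu] at this ⊢
        exact this⟩,
     ⟨fun u => b.1 ⟨u.1, Finset.mem_union_right _ u.2⟩, by
        obtain ⟨x, hx, hm⟩ := b.2
        refine ⟨x, hx, fun u hu => ?_⟩
        have := hm u (Finset.mem_union_right _ hu)
        simp only [pext, dif_pos (Finset.mem_union_right E1 hu), dif_pos hu] at this ⊢
        exact this⟩)
  invFun p :=
    ⟨fun u => if h : u.1 ∈ E1 then p.1.1 ⟨u.1, h⟩ else
        p.2.1 ⟨u.1, by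
          rcases Finset.mem_union.mp u.2 with h' | h'
          · exact absurd h' h
          · exact h'⟩, by
      obtain ⟨x1, hx1, hm1⟩ := p.1.2
      obtain ⟨x2, hx2, hm2⟩ := p.2.2
      obtain ⟨y1, hy1, hy1a, hy1b⟩ := h1 x1 hx1
      obtain ⟨y2, hy2, hy2a, hy2b⟩ := h2 x2 hx2
      refine ⟨y1 + y2, tdc_add hy1 hy2, fun u hu => ?_⟩
      simp only [Pi.add_apply, pext, dif_pos hu]
      rcases Finset.mem_union.mp hu with h' | h'
      · rw [dif_pos h', hy1a u h', hy2b u h', add_zero]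
        have := hm1 u h'
        simpa [pext, h'] using this
      · have hne : u ∉ E1 := Finset.disjoint_right.mp hd h'
        rw [dif_neg hne, hy1b u h', hy2a u h', zero_add]
        have := hm2 u h'
        simpa [pext, h'] using this⟩
  left_inv b := by
    apply Subtype.ext
    funext u
    by_cases h : u.1 ∈ E1
    · simp only [dif_pos h]
    · simp only [dif_neg h]
  right_inv p := by
    refine Prod.ext (Subtype.ext (funext fun u => ?_)) (Subtype.ext (funext fun u => ?_))
    · simp only [dif_pos u.2]
    · have hne : u.1 ∉ E1 := Finset.disjoint_right.mp hd u.2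
      simp only [dif_neg hne]

lemma N_mul (E1 E2 : Finset (ℤ × ℤ)) (hd : Disjoint E1 E2)
    (h1 : Splits E1 E2) (h2 : Splits E2 E1) :
    N (E1 ∪ E2) = N E1 * N E2 := by
  rw [N, Nat.card_congr (splitEquiv E1 E2 hd h1 h2), Nat.card_prod]
  rfl

lemma mu_cyl_split {μ : Measure Ω} (hp : IsProbabilityMeasure μ)
    (hG : μ {x | ThreeDotConfig x} = 1)
    (hinv : ∀ g : Ω, ThreeDotConfig g → μ.map (fun x => x + g) = μ)
    (E1 E2 : Finset (ℤ × ℤ)) (hd : Disjoint E1 E2)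
    (h1 : Splits E1 E2) (h2 : Splits E2 E1) (a : Ω) :
    μ (cyl (E1 ∪ E2) a) = μ (cyl E1 a) * μ (cyl E2 a) := by
  by_cases h : Ext (E1 ∪ E2) a
  · rw [mu_cyl_of_ext hp hG hinv h,
      mu_cyl_of_ext hp hG hinv (ext_mono Finset.subset_union_left h),
      mu_cyl_of_ext hp hG hinv (ext_mono Finset.subset_union_right h),
      N_mul E1 E2 hd h1 h2, Nat.cast_mul,
      ENNReal.mul_inv (Or.inr (ENNReal.natCast_ne_top _)) (Or.inl (ENNReal.natCast_ne_top _))]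
  · rw [mu_cyl_of_not_ext hp hG h]
    by_cases hA : Ext E1 a
    · by_cases hB : Ext E2 a
      · exfalso
        obtain ⟨x1, hx1, hm1⟩ := hA
        obtain ⟨x2, hx2, hm2⟩ := hB
        obtain ⟨y1, hy1, hy1a, hy1b⟩ := h1 x1 hx1
        obtain ⟨y2, hy2, hy2a, hy2b⟩ := h2 x2 hx2
        refine h ⟨y1 + y2, tdc_add hy1 hy2, fun u hu => ?_⟩
        simp only [Pi.add_apply]
        rcases Finset.mem_union.mp hu with h' | h'
        · rw [hy1a u h', hy2b u h', add_zero, hm1 u h']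
        · rw [hy1b u h', hy2a u h', zero_add, hm2 u h']
      · rw [mu_cyl_of_not_ext hp hG hB, mul_zero]
    · rw [mu_cyl_of_not_ext hp hG hA, zero_mul]


end ThreeDotAux

namespace ThreeDotAux

/-- Cylinder sets with base in `R`. -/
def cylSets (R : Set (ℤ × ℤ)) : Set (Set Ω) :=
  {S | ∃ F : Finset (ℤ × ℤ), ↑F ⊆ R ∧ ∃ a : Ω, S = cyl F a}

lemma cyl_empty (a : Ω) : cyl ∅ a = Set.univ := by
  ext x; simp [cyl]

lemma cyl_union (E1 E2 : Finset (ℤ × ℤ)) (a : Ω) :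
    cyl (E1 ∪ E2) a = cyl E1 a ∩ cyl E2 a := by
  ext x
  simp only [cyl, Set.mem_setOf_eq, Set.mem_inter_iff, Finset.mem_union]
  constructor
  · intro h; exact ⟨fun u hu => h u (Or.inl hu), fun u hu => h u (Or.inr hu)⟩
  · rintro ⟨h1, h2⟩ u hu; rcases hu with hu | hu
    · exact h1 u hu
    · exact h2 u hu

lemma isPiSystem_cylSets (R : Set (ℤ × ℤ)) : IsPiSystem (cylSets R) := by
  rintro S ⟨F, hF, a, rfl⟩ T ⟨F', hF', a', rfl⟩ hne
  obtain ⟨y, hy1, hy2⟩ := hne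
  refine ⟨F ∪ F', by rw [Finset.coe_union]; exact Set.union_subset hF hF',
    fun u => if u ∈ F then a u else a' u, ?_⟩
  ext x
  simp only [Set.mem_inter_iff, cyl, Set.mem_setOf_eq, Finset.mem_union]
  constructor
  · rintro ⟨hxa, hxa'⟩ u hu
    by_cases h : u ∈ F
    · rw [if_pos h]; exact hxa u h
    · rw [if_neg h]; exact hxa' u (hu.resolve_left h)
  · intro hx
    constructor
    · intro u hu; have := hx u (Or.inl hu); rwa [if_pos hu] at this
    · intro u hu
      have := hx u (Or.inr hu)
      by_cases h : u ∈ F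
      · rw [if_pos h] at this
        rw [this, ← hy1 u h, hy2 u hu]
      · rwa [if_neg h] at this

lemma generateFrom_cylSets (R : Set (ℤ × ℤ)) :
    MeasurableSpace.generateFrom (cylSets R) = coordsAlg R := by
  apply le_antisymm
  · refine MeasurableSpace.generateFrom_le ?_
    rintro S ⟨F, hF, a, rfl⟩
    have e : cyl F a = ⋂ u ∈ F, (fun x : Ω => x u) ⁻¹' {a u} := by
      ext x; simp [cyl]
    rw [e]
    refine Finset.measurableSet_biInter (m := coordsAlg R) _ fun u hu => ?_
    have hle : MeasurableSpace.comap (fun x : Ω => x u) inferInstance ≤ coordsAlg R := by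
      rw [coordsAlg]
      exact le_iSup₂ (f := fun (u : ℤ × ℤ) (_ : u ∈ R) =>
        MeasurableSpace.comap (fun x : Ω => x u) inferInstance) u (hF hu)
    exact hle _ ⟨{a u}, measurableSet_singleton _, rfl⟩
  · rw [coordsAlg]
    refine iSup₂_le fun u hu => ?_
    rintro S ⟨A, _, rfl⟩
    have e : (fun x : Ω => x u) ⁻¹' A = ⋃ c ∈ A, cyl {u} (fun _ => c) := by
      ext x
      simp only [Set.mem_preimage, Set.mem_iUnion, cyl, Finset.mem_singleton,
        Set.mem_setOf_eq]
      constructor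
      · intro h; exact ⟨x u, h, fun v hv => by rw [hv]⟩
      · rintro ⟨c, hc, h⟩; rw [h u rfl]; exact hc
    rw [e]
    refine MeasurableSet.biUnion (Set.to_countable _) fun c _ => ?_
    exact MeasurableSpace.measurableSet_generateFrom
      ⟨{u}, by simpa using hu, fun _ => c, rfl⟩

lemma coordsAlg_le (R : Set (ℤ × ℤ)) :
    coordsAlg R ≤ (inferInstance : MeasurableSpace Ω) := by
  rw [coordsAlg]
  exact iSup₂_le fun u _ => (measurable_pi_apply u).comap_le

lemma region0_eq (u : ℤ × ℤ) : u ∈ ledrappierRegion 0 ↔ R1' u := by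
  show u.1 < 0 ∧ 0 < u.2 ∧ u.2 < -u.1 ↔ 1 ≤ u.2 ∧ u.1 + u.2 ≤ -1
  omega

lemma region1_eq (u : ℤ × ℤ) : u ∈ ledrappierRegion 1 ↔ R2' u := by
  show u.2 < 0 ∧ 0 < u.1 ∧ u.1 < -u.2 ↔ 1 ≤ u.1 ∧ u.1 + u.2 ≤ -1
  omega

lemma region2_eq (u : ℤ × ℤ) : u ∈ ledrappierRegion 2 ↔ R3' u := by
  show 0 < u.1 ∧ 0 < u.2 ↔ 1 ≤ u.1 ∧ 1 ≤ u.2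
  omega

/-- The master factorization lemma. -/
lemma master {μ : Measure Ω} (hp : IsProbabilityMeasure μ)
    (hG : μ {x | ThreeDotConfig x} = 1)
    (hinv : ∀ g : Ω, ThreeDotConfig g → μ.map (fun x => x + g) = μ)
    (F1 F2 F3 : Finset (ℤ × ℤ))
    (hF1 : ∀ u ∈ F1, R1' u) (hF2 : ∀ u ∈ F2, R2' u) (hF3 : ∀ u ∈ F3, R3' u) (a : Ω) :
    μ (cyl (F1 ∪ (F2 ∪ F3)) a) = μ (cyl F1 a) * (μ (cyl F2 a) * μ (cyl F3 a)) := by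
  have hR12 : ∀ u : ℤ × ℤ, R1' u → ¬ R2' u := by
    intro u h1 h2; rcases h1 with ⟨a1, a2⟩; rcases h2 with ⟨b1, b2⟩; omega
  have hR13 : ∀ u : ℤ × ℤ, R1' u → ¬ R3' u := by
    intro u h1 h2; rcases h1 with ⟨a1, a2⟩; rcases h2 with ⟨b1, b2⟩; omega
  have hR23 : ∀ u : ℤ × ℤ, R2' u → ¬ R3' u := by
    intro u h1 h2; rcases h1 with ⟨a1, a2⟩; rcases h2 with ⟨b1, b2⟩; omega
  have hd23 : Disjoint F2 F3 := by
    rw [Finset.disjoint_left]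
    intro u hu hu'
    exact hR23 u (hF2 u hu) (hF3 u hu')
  have hd1 : Disjoint F1 (F2 ∪ F3) := by
    rw [Finset.disjoint_left]
    intro u hu hu'
    rcases Finset.mem_union.mp hu' with h | h
    · exact hR12 u (hF1 u hu) (hF2 u h)
    · exact hR13 u (hF1 u hu) (hF3 u h)
  have s1 : Splits F1 (F2 ∪ F3) := by
    intro x hx
    obtain ⟨y, hy, hyA, hyB, hyC⟩ := claimB hx
    refine ⟨y, hy, fun u hu => hyA u (hF1 u hu), fun u hu => ?_⟩
    rcases Finset.mem_union.mp hu with h | h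
    · exact hyB u (hF2 u h)
    · exact hyC u (hF3 u h)
  have s1' : Splits (F2 ∪ F3) F1 := by
    intro x hx
    obtain ⟨y1, hy1, hy1A, hy1B, hy1C⟩ := claimC hx
    obtain ⟨y2, hy2, hy2A, hy2B, hy2C⟩ := claimA hx
    refine ⟨y1 + y2, tdc_add hy1 hy2, fun u hu => ?_, fun u hu => ?_⟩
    · simp only [Pi.add_apply]
      rcases Finset.mem_union.mp hu with h | h
      · rw [hy1A u (hF2 u h), hy2C u (hF2 u h), add_zero]
      · rw [hy1C u (hF3 u h), hy2A u (hF3 u h), zero_add]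
    · simp only [Pi.add_apply]
      rw [hy1B u (hF1 u hu), hy2B u (hF1 u hu), add_zero]
  have s2 : Splits F2 F3 := by
    intro x hx
    obtain ⟨y, hy, hyA, _, hyC⟩ := claimC hx
    exact ⟨y, hy, fun u hu => hyA u (hF2 u hu), fun u hu => hyC u (hF3 u hu)⟩
  have s2' : Splits F3 F2 := by
    intro x hx
    obtain ⟨y, hy, hyA, _, hyC⟩ := claimA hx
    exact ⟨y, hy, fun u hu => hyA u (hF3 u hu), fun u hu => hyC u (hF2 u hu)⟩
  rw [mu_cyl_split hp hG hinv F1 (F2 ∪ F3) hd1 s1 s1' a,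
    mu_cyl_split hp hG hinv F2 F3 hd23 s2 s2' a]

end ThreeDotAux

open ThreeDotAux in
/-- **(Mutually independent regions for the 3-dot system.)**
Let `μ` be the normalized Haar probability measure of the 3-dot group `G`.  Then, under
`μ`, the three families of coordinates `(x_u)_{u∈R1}`, `(x_u)_{u∈R2}`, `(x_u)_{u∈R3}`
are mutually independent, i.e. the σ-algebras they generate are mutually independent. -/
theorem threeDot_regions_independent
    (μ : Measure ((ℤ × ℤ) → ZMod 2)) (hμ : IsHaarOnThreeDot μ) :
    iIndep (fun k : Fin 3 => coordsAlg (ledrappierRegion k)) μ := by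
  obtain ⟨hp, hG, hinv⟩ := hμ
  refine ProbabilityTheory.iIndepSets.iIndep
    (fun k => coordsAlg_le (ledrappierRegion k))
    (fun k => cylSets (ledrappierRegion k))
    (fun k => isPiSystem_cylSets _)
    (fun k => (generateFrom_cylSets _).symm) ?_
  rw [ProbabilityTheory.iIndepSets_iff]
  intro s f hf
  classical
  have hchoice : ∀ k ∈ s, ∃ Fa : Finset (ℤ × ℤ) × Ω,
      ↑Fa.1 ⊆ ledrappierRegion k ∧ f k = cyl Fa.1 Fa.2 := by
    intro k hk
    obtain ⟨F, hF, a, ha⟩ := hf k hk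
    exact ⟨(F, a), hF, ha⟩
  choose! g hg1 hg2 using hchoice
  set Fk : Fin 3 → Finset (ℤ × ℤ) := fun k => if k ∈ s then (g k).1 else ∅ with hFk
  have hsub : ∀ k : Fin 3, ∀ u ∈ Fk k, u ∈ ledrappierRegion k := by
    intro k u hu
    by_cases hk : k ∈ s
    · simp only [hFk, if_pos hk] at hu
      exact hg1 k hk hu
    · simp only [hFk, if_neg hk] at hu
      exact absurd hu (Finset.notMem_empty u)
  set A : Ω := fun u => if u ∈ Fk 0 then (g 0).2 u else
    if u ∈ Fk 1 then (g 1).2 u else (g 2).2 u with hA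
  -- the regions are pairwise incompatible
  have hcompat : ∀ k : Fin 3, ∀ u ∈ Fk k, A u = (g k).2 u := by
    intro k
    have h0 : ∀ u ∈ Fk 0, A u = (g 0).2 u := by
      intro u hu; simp only [hA, if_pos hu]
    have h1 : ∀ u ∈ Fk 1, A u = (g 1).2 u := by
      intro u hu
      have hu0 : u ∉ Fk 0 := by
        intro hu0
        have r1 := (region0_eq u).mp (hsub 0 u hu0)
        have r2 := (region1_eq u).mp (hsub 1 u hu)
        rcases r1 with ⟨a1, a2⟩; rcases r2 with ⟨b1, b2⟩; omega
      simp only [hA, if_neg hu0, if_pos hu]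
    have h2 : ∀ u ∈ Fk 2, A u = (g 2).2 u := by
      intro u hu
      have hu0 : u ∉ Fk 0 := by
        intro hu0
        have r1 := (region0_eq u).mp (hsub 0 u hu0)
        have r2 := (region2_eq u).mp (hsub 2 u hu)
        rcases r1 with ⟨a1, a2⟩; rcases r2 with ⟨b1, b2⟩; omega
      have hu1 : u ∉ Fk 1 := by
        intro hu1
        have r1 := (region1_eq u).mp (hsub 1 u hu1)
        have r2 := (region2_eq u).mp (hsub 2 u hu)
        rcases r1 with ⟨a1, a2⟩; rcases r2 with ⟨b1, b2⟩; omega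
      simp only [hA, if_neg hu0, if_neg hu1]
    fin_cases k
    · exact h0
    · exact h1
    · exact h2
  have hfk : ∀ k ∈ s, f k = cyl (Fk k) A := by
    intro k hk
    rw [hg2 k hk]
    have : Fk k = (g k).1 := by simp only [hFk, if_pos hk]
    rw [this]
    apply cyl_congr
    intro u hu
    exact (hcompat k u (show u ∈ Fk k by rw [this]; exact hu)).symm
  have hInter : ⋂ k ∈ s, f k = cyl (Fk 0 ∪ (Fk 1 ∪ Fk 2)) A := by
    rw [cyl_union, cyl_union]
    ext x
    simp only [Set.mem_iInter, Set.mem_inter_iff]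
    constructor
    · intro hx
      have hmem : ∀ k : Fin 3, x ∈ cyl (Fk k) A := by
        intro k
        by_cases hk : k ∈ s
        · rw [← hfk k hk]; exact hx k hk
        · have : Fk k = ∅ := by simp only [hFk, if_neg hk]
          rw [this, cyl_empty]; trivial
      exact ⟨hmem 0, hmem 1, hmem 2⟩
    · rintro ⟨h0, h1, h2⟩ k hk
      rw [hfk k hk]
      fin_cases k
      · exact h0
      · exact h1
      · exact h2
  have hProd : ∏ k ∈ s, μ (f k) = μ (cyl (Fk 0) A) * (μ (cyl (Fk 1) A) * μ (cyl (Fk 2) A)) := by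
    have e1 : ∏ k ∈ s, μ (f k) = ∏ k ∈ s, μ (cyl (Fk k) A) :=
      Finset.prod_congr rfl fun k hk => by rw [hfk k hk]
    have e2 : ∏ k ∈ s, μ (cyl (Fk k) A) = ∏ k : Fin 3, μ (cyl (Fk k) A) := by
      refine Finset.prod_subset (Finset.subset_univ s) fun k _ hk => ?_
      have : Fk k = ∅ := by simp only [hFk, if_neg hk]
      rw [this, cyl_empty, measure_univ]
    rw [e1, e2, Fin.prod_univ_three, mul_assoc]
  rw [hInter, hProd]
  exact master hp hG hinv (Fk 0) (Fk 1) (Fk 2)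
    (fun u hu => (region0_eq u).mp (hsub 0 u hu))
    (fun u hu => (region1_eq u).mp (hsub 1 u hu))
    (fun u hu => (region2_eq u).mp (hsub 2 u hu)) A
end

section
/- Let μ be a stationary process on A^ℤ (A a finite alphabet) admitting a 3-dot-type self-joining. Then for every m ≥ 1, the law of (ξ_0,…,ξ_{m−1}) under μ is the uniform distribution on the set {w ∈ A^m : μ([w]) > 0} of positive-probability words of length m. -/
open MeasureTheory Filter ProbabilityTheory

/-- The coordinate shift `T` on `A^ℤ`: `(T x) i = x (i+1)`. -/
def shiftT (A : Type*) : (ℤ → A) → (ℤ → A) := fun x i => x (i + 1)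

/-- The window `ξ_p^{p+ℓ} = (x_p, …, x_{p+ℓ})` of length `ℓ+1` starting at position `p`. -/
def window {A : Type*} (ℓ : ℕ) (p : ℤ) (x : ℤ → A) : Fin (ℓ + 1) → A :=
  fun i => x (p + (i : ℕ))

/-- 2-fold mixing of a stationary process `μ` on `A^ℤ`. -/
def Mixing2 {A : Type*} [MeasurableSpace A] (μ : Measure (ℤ → A)) : Prop :=
  ∀ (ℓ : ℕ) (E1 E2 : Set (Fin (ℓ + 1) → A)),
    Tendsto (fun p : ℕ =>
        (μ {x | window ℓ 0 x ∈ E1 ∧ window ℓ (p : ℤ) x ∈ E2}).toReal -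
          (μ {x | window ℓ 0 x ∈ E1}).toReal * (μ {x | window ℓ 0 x ∈ E2}).toReal)
      atTop (nhds 0)

/-- 3-fold mixing of a stationary process `μ` on `A^ℤ`. -/
def Mixing3 {A : Type*} [MeasurableSpace A] (μ : Measure (ℤ → A)) : Prop :=
  ∀ (ℓ : ℕ) (E1 E2 E3 : Set (Fin (ℓ + 1) → A)),
    Tendsto (fun pq : ℕ × ℕ =>
        (μ {x | window ℓ 0 x ∈ E1 ∧ window ℓ (pq.1 : ℤ) x ∈ E2 ∧
              window ℓ ((pq.1 : ℤ) + (pq.2 : ℤ)) x ∈ E3}).toReal -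
          (μ {x | window ℓ 0 x ∈ E1}).toReal * (μ {x | window ℓ 0 x ∈ E2}).toReal *
            (μ {x | window ℓ 0 x ∈ E3}).toReal)
      (atTop ×ˢ atTop) (nhds 0)

/-- The cylinder set `[w] = {x : (x_0,…,x_{m-1}) = w}` associated with a word `w ∈ A^m`. -/
def cylSet {A : Type*} (m : ℕ) (w : Fin m → A) : Set (ℤ → A) :=
  {x | ∀ i : Fin m, x ((i : ℕ) : ℤ) = w i}

/-- `H_m(μ) = -∑_{w ∈ A^m} μ([w]) log μ([w])`. -/
noncomputable def Hm {A : Type*} [Fintype A] [MeasurableSpace A]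
    (μ : Measure (ℤ → A)) (m : ℕ) : ℝ :=
  -∑ w : Fin m → A, (μ (cylSet m w)).toReal * Real.log (μ (cylSet m w)).toReal

/-- `μ` is a periodic process: for some `n ≥ 1`, `μ`-a.e. `x` is `n`-periodic. -/
def PeriodicProcess {A : Type*} [MeasurableSpace A] (μ : Measure (ℤ → A)) : Prop :=
  ∃ n : ℕ, 1 ≤ n ∧ ∀ᵐ x ∂μ, ∀ i : ℤ, x (i + (n : ℤ)) = x i

/-- The simultaneous shift `T × T × T` on the triple product. -/
def shiftT3 (A : Type*) : (ℤ → A) × (ℤ → A) × (ℤ → A) → (ℤ → A) × (ℤ → A) × (ℤ → A) :=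
  fun p => (shiftT A p.1, shiftT A p.2.1, shiftT A p.2.2)

/-- `lam` is a 3-fold self-joining of `μ`: it is invariant under the simultaneous shift
and its three one-dimensional marginals are equal to `μ`. -/
def IsSelfJoining3 {A : Type*} [MeasurableSpace A] (μ : Measure (ℤ → A))
    (lam : Measure ((ℤ → A) × (ℤ → A) × (ℤ → A))) : Prop :=
  lam.map (shiftT3 A) = lam ∧
    lam.map (fun p => p.1) = μ ∧ lam.map (fun p => p.2.1) = μ ∧ lam.map (fun p => p.2.2) = μ

/-- The coordinates `(ξ, ξ', ξ'')` of `lam` are pairwise independent: all three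
two-dimensional marginals equal `μ ⊗ μ`. -/
def PairwiseIndepCoords {A : Type*} [MeasurableSpace A] (μ : Measure (ℤ → A))
    (lam : Measure ((ℤ → A) × (ℤ → A) × (ℤ → A))) : Prop :=
  lam.map (fun p => (p.1, p.2.1)) = μ.prod μ ∧
    lam.map (fun p => (p.1, p.2.2)) = μ.prod μ ∧
      lam.map (fun p => (p.2.1, p.2.2)) = μ.prod μ

/-- A 3-dot-type self-joining of `μ`: a 3-fold self-joining with pairwise independent
coordinates such that `ξ''_i = f (ξ_i, ξ'_i)` a.s. for every `i`, for some `f : A × A → A`. -/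
def IsThreeDotJoining {A : Type*} [MeasurableSpace A] (μ : Measure (ℤ → A))
    (lam : Measure ((ℤ → A) × (ℤ → A) × (ℤ → A))) : Prop :=
  IsSelfJoining3 μ lam ∧ PairwiseIndepCoords μ lam ∧
    ∃ f : A → A → A, ∀ i : ℤ, ∀ᵐ p ∂lam, p.2.2 i = f (p.1 i) (p.2.1 i)
/-- The finite set of positive-probability words of length `m`. -/
noncomputable def posWords {A : Type*} [Fintype A] [MeasurableSpace A]
    (μ : Measure (ℤ → A)) (m : ℕ) : Finset (Fin m → A) :=
  @Finset.filter _ (fun w => μ (cylSet m w) ≠ 0) (Classical.decPred _) Finset.univ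

/-- The law of `(ξ_0, …, ξ_{m-1})` is the uniform distribution on the set of
positive-probability words of length `m`. -/
def UniformOnSupport {A : Type*} [Fintype A] [MeasurableSpace A]
    (μ : Measure (ℤ → A)) (m : ℕ) : Prop :=
  ∀ w : Fin m → A, μ (cylSet m w) ≠ 0 →
    μ (cylSet m w) = 1 / ((posWords μ m).card : ENNReal)

/-- Auxiliary: a finite measurable partition by the fibers of a map into a fintype
decomposes the measure of any measurable set into a finite sum. -/
lemma measure_eq_sum_fibers' {X β : Type*} [MeasurableSpace X] [MeasurableSpace β]
    [Fintype β] [MeasurableSingletonClass β]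
    (ν : Measure X) (W : X → β) (hW : Measurable W)
    (S : Set X) (hS : MeasurableSet S) :
    ν S = ∑ c : β, ν (S ∩ W ⁻¹' {c}) := by
  have hU : S = ⋃ c, S ∩ W ⁻¹' {c} := by
    ext p; simp
  have hdis : Pairwise (Function.onFun Disjoint (fun c => S ∩ W ⁻¹' {c})) := by
    intro c d hcd
    simp only [Function.onFun, Set.disjoint_left]
    rintro p ⟨-, hc⟩ ⟨-, hd⟩
    simp only [Set.mem_preimage, Set.mem_singleton_iff] at hc hd
    exact hcd (hc ▸ hd ▸ rfl)
  conv_lhs => rw [hU]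
  rw [measure_iUnion hdis (fun c => hS.inter (hW (measurableSet_singleton c))),
    tsum_fintype]

/-- **(3-dot-type self-joinings force uniform finite-dimensional distributions.)**
Let `μ` be a stationary process on `A^ℤ` (with `A` a finite alphabet) admitting a
3-dot-type self-joining.  Then for every `m ≥ 1`, the law of `(ξ_0, …, ξ_{m−1})` under
`μ` is the uniform distribution on the set `{w ∈ A^m : μ([w]) > 0}` of
positive-probability words of length `m`. -/


theorem threeDot_joining_uniform_on_support
    {A : Type*} [Fintype A] [MeasurableSpace A] [DiscreteMeasurableSpace A]
    (μ : Measure (ℤ → A)) [IsProbabilityMeasure μ]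
    (hstat : μ.map (shiftT A) = μ)
    (lam : Measure ((ℤ → A) × (ℤ → A) × (ℤ → A)))
    (hlam : IsThreeDotJoining μ lam) :
    ∀ m : ℕ, 1 ≤ m → UniformOnSupport μ m := by
  classical
  intro m hm
  obtain ⟨⟨hshift, h1, h2, h3⟩, ⟨h12, h13, h23⟩, f, hf⟩ := hlam
  -- window maps
  set Wc : (ℤ → A) → (Fin m → A) := fun x i => x ((i : ℕ) : ℤ) with hWc
  have hWcm : Measurable Wc := measurable_pi_lambda _ (fun i => measurable_pi_apply _)
  have hcyl : ∀ w : Fin m → A, cylSet m w = Wc ⁻¹' {w} := by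
    intro w
    ext x
    simp [cylSet, Wc, funext_iff]
  have hcylm : ∀ w : Fin m → A, MeasurableSet (cylSet m w) := by
    intro w
    rw [hcyl]
    exact hWcm (measurableSet_singleton w)
  set P : (Fin m → A) → ENNReal := fun w => μ (cylSet m w) with hP
  set F : (Fin m → A) → (Fin m → A) → (Fin m → A) := fun u v i => f (u i) (v i) with hF
  -- measurable projections to windows
  set X := (ℤ → A) × (ℤ → A) × (ℤ → A) with hX
  have hm1 : Measurable (fun p : X => p.1) := measurable_fst
  have hm2 : Measurable (fun p : X => p.2.1) := measurable_fst.comp measurable_snd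
  have hm3 : Measurable (fun p : X => p.2.2) := measurable_snd.comp measurable_snd
  -- pairwise marginal computations
  have hpair : ∀ (g : X → (ℤ → A) × (ℤ → A)), Measurable g →
      lam.map g = μ.prod μ → ∀ u v : Fin m → A,
      lam (g ⁻¹' (cylSet m u ×ˢ cylSet m v)) = P u * P v := by
    intro g hg hmap u v
    rw [← Measure.map_apply hg ((hcylm u).prod (hcylm v)), hmap, Measure.prod_prod]
  have hA12 : ∀ u v : Fin m → A,
      lam {p : X | Wc p.1 = u ∧ Wc p.2.1 = v} = P u * P v := by
    intro u v
    have := hpair (fun p => (p.1, p.2.1)) (hm1.prodMk hm2) h12 u v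
    rw [← this]
    congr 1
    ext p
    simp [hcyl, Set.mem_prod, X]
  have hA13 : ∀ u w : Fin m → A,
      lam {p : X | Wc p.1 = u ∧ Wc p.2.2 = w} = P u * P w := by
    intro u w
    have := hpair (fun p => (p.1, p.2.2)) (hm1.prodMk hm3) h13 u w
    rw [← this]
    congr 1
    ext p
    simp [hcyl, Set.mem_prod, X]
  have hA23 : ∀ v w : Fin m → A,
      lam {p : X | Wc p.2.1 = v ∧ Wc p.2.2 = w} = P v * P w := by
    intro v w
    have := hpair (fun p => (p.2.1, p.2.2)) (hm2.prodMk hm3) h23 v w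
    rw [← this]
    congr 1
    ext p
    simp [hcyl, Set.mem_prod, X]
  -- a.e. functional relation on the window
  have hae : ∀ᵐ p ∂lam, ∀ i : Fin m, p.2.2 ((i : ℕ) : ℤ) =
      f (p.1 ((i : ℕ) : ℤ)) (p.2.1 ((i : ℕ) : ℤ)) :=
    ae_all_iff.2 fun i => hf _
  -- core computation
  have hcore : ∀ u v w : Fin m → A,
      lam {p : X | Wc p.1 = u ∧ Wc p.2.1 = v ∧ Wc p.2.2 = w} =
        if F u v = w then P u * P v else 0 := by
    intro u v w
    by_cases h : F u v = w
    · rw [if_pos h, ← hA12 u v]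
      apply measure_congr
      rw [Filter.eventuallyEq_set]
      filter_upwards [hae] with p hp
      constructor
      · rintro ⟨h1', h2', -⟩
        exact ⟨h1', h2'⟩
      · rintro ⟨h1', h2'⟩
        refine ⟨h1', h2', ?_⟩
        funext i
        have := hp i
        rw [show p.1 ((i : ℕ) : ℤ) = u i from congrFun h1' i,
          show p.2.1 ((i : ℕ) : ℤ) = v i from congrFun h2' i] at this
        rw [show (Wc p.2.2) i = p.2.2 ((i : ℕ) : ℤ) from rfl, this]
        exact congrFun h i
    · rw [if_neg h]
      have hemp : {p : X | Wc p.1 = u ∧ Wc p.2.1 = v ∧ Wc p.2.2 = w}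
          =ᵐ[lam] (∅ : Set X) := by
        rw [Filter.eventuallyEq_set]
        filter_upwards [hae] with p hp
        simp only [Set.mem_empty_iff_false, iff_false]
        rintro ⟨h1', h2', h3'⟩
        apply h
        funext i
        have := hp i
        rw [show p.1 ((i : ℕ) : ℤ) = u i from congrFun h1' i,
          show p.2.1 ((i : ℕ) : ℤ) = v i from congrFun h2' i] at this
        rw [show F u v i = f (u i) (v i) from rfl, ← this]
        exact congrFun h3' i
      rw [measure_congr hemp, measure_empty]
  -- key identity 1: fixing u, sum over v
  have hkey1 : ∀ u w : Fin m → A, P u ≠ 0 →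
      P w = ∑ v : Fin m → A, if F u v = w then P v else 0 := by
    intro u w hu
    have hSm : MeasurableSet {p : X | Wc p.1 = u ∧ Wc p.2.2 = w} := by
      have : {p : X | Wc p.1 = u ∧ Wc p.2.2 = w} =
          (fun p : X => (p.1, p.2.2)) ⁻¹' (cylSet m u ×ˢ cylSet m w) := by
        ext p; simp [hcyl, Set.mem_prod]
      rw [this]
      exact (hm1.prodMk hm3) ((hcylm u).prod (hcylm w))
    have hdec := measure_eq_sum_fibers' lam (fun p : X => Wc p.2.1)
      (hWcm.comp hm2) _ hSm
    rw [hA13 u w] at hdec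
    have hterm : ∀ v : Fin m → A,
        lam ({p : X | Wc p.1 = u ∧ Wc p.2.2 = w} ∩ (fun p : X => Wc p.2.1) ⁻¹' {v}) =
          if F u v = w then P u * P v else 0 := by
      intro v
      rw [← hcore u v w]
      congr 1
      ext p
      simp only [Set.mem_inter_iff, Set.mem_setOf_eq, Set.mem_preimage,
        Set.mem_singleton_iff, X]
      tauto
    rw [Finset.sum_congr rfl (fun v _ => hterm v)] at hdec
    have hrw : ∀ v : Fin m → A, (if F u v = w then P u * P v else 0) =
        P u * (if F u v = w then P v else 0) := by
      intro v
      by_cases h : F u v = w <;> simp [h]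
    rw [Finset.sum_congr rfl (fun v _ => hrw v), ← Finset.mul_sum] at hdec
    exact (ENNReal.mul_right_inj hu (measure_ne_top μ _)).1 hdec
  -- key identity 2: fixing v, sum over u
  have hkey2 : ∀ v w : Fin m → A, P v ≠ 0 →
      P w = ∑ u : Fin m → A, if F u v = w then P u else 0 := by
    intro v w hv
    have hSm : MeasurableSet {p : X | Wc p.2.1 = v ∧ Wc p.2.2 = w} := by
      have : {p : X | Wc p.2.1 = v ∧ Wc p.2.2 = w} =
          (fun p : X => (p.2.1, p.2.2)) ⁻¹' (cylSet m v ×ˢ cylSet m w) := by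
        ext p; simp [hcyl, Set.mem_prod]
      rw [this]
      exact (hm2.prodMk hm3) ((hcylm v).prod (hcylm w))
    have hdec := measure_eq_sum_fibers' lam (fun p : X => Wc p.1)
      (hWcm.comp hm1) _ hSm
    rw [hA23 v w] at hdec
    have hterm : ∀ u : Fin m → A,
        lam ({p : X | Wc p.2.1 = v ∧ Wc p.2.2 = w} ∩ (fun p : X => Wc p.1) ⁻¹' {u}) =
          if F u v = w then P u * P v else 0 := by
      intro u
      rw [← hcore u v w]
      congr 1
      ext p
      simp only [Set.mem_inter_iff, Set.mem_setOf_eq, Set.mem_preimage,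
        Set.mem_singleton_iff, X]
      tauto
    rw [Finset.sum_congr rfl (fun u _ => hterm u)] at hdec
    have hrw : ∀ u : Fin m → A, (if F u v = w then P u * P v else 0) =
        P v * (if F u v = w then P u else 0) := by
      intro u
      by_cases h : F u v = w <;> simp [h, mul_comm]
    rw [Finset.sum_congr rfl (fun u _ => hrw u), ← Finset.mul_sum] at hdec
    exact (ENNReal.mul_right_inj hv (measure_ne_top μ _)).1 hdec
  -- P (F u v) ≥ P u whenever P v ≠ 0
  have hge : ∀ u v : Fin m → A, P v ≠ 0 → P u ≤ P (F u v) := by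
    intro u v hv
    rw [hkey2 v (F u v) hv]
    have : (if F u v = F u v then P u else 0) ≤
        ∑ u' : Fin m → A, if F u' v = F u v then P u' else 0 :=
      Finset.single_le_sum (f := fun u' => if F u' v = F u v then P u' else 0)
        (fun _ _ => zero_le) (Finset.mem_univ u)
    simpa using this
  -- existence of v with F u v = w on the support
  have hex : ∀ u w : Fin m → A, P u ≠ 0 → P w ≠ 0 →
      ∃ v : Fin m → A, P v ≠ 0 ∧ F u v = w := by
    intro u w hu hw
    have hsum : (∑ v : Fin m → A, if F u v = w then P v else 0) ≠ 0 := by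
      rw [← hkey1 u w hu]; exact hw
    obtain ⟨v, -, hv⟩ := Finset.exists_ne_zero_of_sum_ne_zero hsum
    by_cases h : F u v = w
    · exact ⟨v, by simpa [h] using hv, h⟩
    · simp [h] at hv
  -- all support probabilities are equal
  have hle : ∀ u w : Fin m → A, P u ≠ 0 → P w ≠ 0 → P u ≤ P w := by
    intro u w hu hw
    obtain ⟨v, hv, hFv⟩ := hex u w hu hw
    rw [← hFv]
    exact hge u v hv
  have heq : ∀ u w : Fin m → A, P u ≠ 0 → P w ≠ 0 → P u = P w :=
    fun u w hu hw => le_antisymm (hle u w hu hw) (hle w u hw hu)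
  -- total mass
  have hsum1 : (∑ w : Fin m → A, P w) = 1 := by
    calc (∑ w : Fin m → A, P w)
        = ∑ c : Fin m → A, μ (Set.univ ∩ Wc ⁻¹' {c}) := by
          refine Finset.sum_congr rfl fun w _ => ?_
          rw [Set.univ_inter]
          show μ (cylSet m w) = _
          rw [hcyl]
      _ = μ Set.univ :=
          (measure_eq_sum_fibers' μ Wc hWcm Set.univ MeasurableSet.univ).symm
      _ = 1 := measure_univ
  -- conclude
  intro w hw
  have hmem : ∀ x : Fin m → A, x ∈ posWords μ m ↔ μ (cylSet m x) ≠ 0 := fun x =>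
    (@Finset.mem_filter _ _ (Classical.decPred _) _ x).trans
      (and_iff_right (Finset.mem_univ x))
  have hcard : ((posWords μ m).card : ENNReal) * P w = 1 := by
    have hsplit : (∑ w' ∈ posWords μ m, P w') = ∑ w' : Fin m → A, P w' := by
      refine Finset.sum_subset (Finset.subset_univ _) ?_
      intro x _ hx
      by_contra h
      exact hx ((hmem x).2 h)
    have hconst : (∑ w' ∈ posWords μ m, P w') = (posWords μ m).card • P w := by
      rw [Finset.sum_congr rfl (fun w' hw' => heq w' w ((hmem w').1 hw') hw),
        Finset.sum_const]
    rw [← nsmul_eq_mul, ← hconst, hsplit, hsum1]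
  have hcne : ((posWords μ m).card : ENNReal) ≠ 0 := by
    intro h
    rw [h, zero_mul] at hcard
    exact zero_ne_one hcard
  have hcnt : ((posWords μ m).card : ENNReal) ≠ ⊤ := ENNReal.natCast_ne_top _
  calc P w = 1 * P w := (one_mul _).symm
    _ = (((posWords μ m).card : ENNReal)⁻¹ * ((posWords μ m).card : ENNReal)) * P w := by
        rw [ENNReal.inv_mul_cancel hcne hcnt]
    _ = ((posWords μ m).card : ENNReal)⁻¹ * 1 := by rw [mul_assoc, hcard]
    _ = 1 / ((posWords μ m).card : ENNReal) := by rw [mul_one, one_div]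
end

section
/- Let μ be a stationary process on A^ℤ (A a finite alphabet) such that for every m ≥ 1 the law of (ξ_0,…,ξ_{m−1}) is uniform on its support; let p_m := #{w ∈ A^m : μ([w]) > 0}. Then for every m ≥ 1: p_m divides p_{m+1}; every positive-probability word of length m has exactly a_m := p_{m+1}/p_m one-letter right-extensions of positive probability, each with conditional probability 1/a_m; and the sequence (a_m) is nonincreasing: a_{m+1} ≤ a_m. -/
open MeasureTheory Filter ProbabilityTheory

section AuxUOS

variable {A : Type*} [Fintype A] [MeasurableSpace A] [DiscreteMeasurableSpace A]

lemma measurable_shiftT_aux : Measurable (shiftT A) :=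
  measurable_pi_lambda _ (fun i => measurable_pi_apply _)

lemma measurableSet_cylSet_aux (m : ℕ) (w : Fin m → A) : MeasurableSet (cylSet m w) := by
  have h : cylSet m w = ⋂ i : Fin m, (fun x : ℤ → A => x ((i : ℕ) : ℤ)) ⁻¹' {w i} := by
    ext x; simp [cylSet]
  rw [h]
  exact MeasurableSet.iInter fun i =>
    (measurable_pi_apply _) (MeasurableSet.singleton _)

lemma mem_posWords_aux (μ : Measure (ℤ → A)) (m : ℕ) (w : Fin m → A) :
    w ∈ posWords μ m ↔ μ (cylSet m w) ≠ 0 := by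
  classical
  simp [posWords]

lemma cylSet_eq_iUnion_snoc (m : ℕ) (w : Fin m → A) :
    cylSet m w = ⋃ a : A, cylSet (m + 1) (Fin.snoc w a) := by
  ext x
  constructor
  · intro hx
    refine Set.mem_iUnion.2 ⟨x ((m : ℕ) : ℤ), fun i => ?_⟩
    refine Fin.lastCases ?_ (fun j => ?_) i
    · simp [Fin.snoc_last]
    · simpa [Fin.snoc_castSucc] using hx j
  · intro hx
    obtain ⟨a, ha⟩ := Set.mem_iUnion.1 hx
    intro i
    have := ha i.castSucc
    simpa [Fin.snoc_castSucc] using this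

lemma measure_cyl_eq_sum (μ : Measure (ℤ → A)) (m : ℕ) (w : Fin m → A) :
    μ (cylSet m w) = ∑ a : A, μ (cylSet (m + 1) (Fin.snoc w a)) := by
  rw [cylSet_eq_iUnion_snoc m w]
  rw [measure_iUnion ?_ (fun a => measurableSet_cylSet_aux _ _)]
  · exact tsum_fintype _
  · intro a b hab
    refine Set.disjoint_left.2 fun x hxa hxb => hab ?_
    have h1 := hxa (Fin.last m)
    have h2 := hxb (Fin.last m)
    simp [Fin.snoc_last] at h1 h2
    rw [← h1, ← h2]

lemma posWords_nonempty_aux (μ : Measure (ℤ → A)) [IsProbabilityMeasure μ] (m : ℕ) :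
    (posWords μ m).Nonempty := by
  by_contra h
  rw [Finset.not_nonempty_iff_eq_empty] at h
  have hall : ∀ w : Fin m → A, μ (cylSet m w) = 0 := by
    intro w
    by_contra hw
    have : w ∈ posWords μ m := (mem_posWords_aux μ m w).2 hw
    simp [h] at this
  have hsub : (Set.univ : Set (ℤ → A)) ⊆ ⋃ w : Fin m → A, cylSet m w := fun x _ =>
    Set.mem_iUnion.2 ⟨fun i => x ((i : ℕ) : ℤ), fun i => rfl⟩
  have h0 : μ Set.univ = 0 :=
    measure_mono_null hsub (measure_iUnion_null fun w => hall w)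
  simp at h0

lemma suffix_pos_aux (μ : Measure (ℤ → A)) (hstat : μ.map (shiftT A) = μ) (n : ℕ)
    (u : Fin (n + 1) → A) (hu : μ (cylSet (n + 1) u) ≠ 0) :
    μ (cylSet n (fun i => u i.succ)) ≠ 0 := by
  intro h0
  apply hu
  have hmap : μ (shiftT A ⁻¹' cylSet n (fun i => u i.succ)) = 0 := by
    have := Measure.map_apply (μ := μ) measurable_shiftT_aux
      (measurableSet_cylSet_aux n (fun i => u i.succ))
    rw [hstat] at this
    rw [← this, h0]
  refine measure_mono_null ?_ hmap
  intro x hx i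
  have := hx i.succ
  simpa [shiftT, Fin.val_succ, add_comm, push_cast] using this
  
lemma key_count (μ : Measure (ℤ → A)) [IsProbabilityMeasure μ]
    (hunif : ∀ m : ℕ, 1 ≤ m → UniformOnSupport μ m)
    (m : ℕ) (hm : 1 ≤ m) (w : Fin m → A) (hw : μ (cylSet m w) ≠ 0) :
    (@Finset.filter A (fun a => μ (cylSet (m + 1) (Fin.snoc w a)) ≠ 0)
        (Classical.decPred _) Finset.univ).card * (posWords μ m).card
      = (posWords μ (m + 1)).card := by
  classical
  rw [Finset.filter_congr_decidable]
  set pm := (posWords μ m).card with hpm_def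
  set p1 := (posWords μ (m + 1)).card with hp1_def
  set k := (Finset.filter (fun a => μ (cylSet (m + 1) (Fin.snoc w a)) ≠ 0)
      Finset.univ).card with hk_def
  have hpm0 : pm ≠ 0 := by
    have : w ∈ posWords μ m := (mem_posWords_aux μ m w).2 hw
    exact Finset.card_ne_zero_of_mem this
  have hp10 : p1 ≠ 0 :=
    Finset.card_ne_zero_of_mem (posWords_nonempty_aux μ (m + 1)).choose_spec
  have hsum : μ (cylSet m w) = (k : ENNReal) * (1 / (p1 : ENNReal)) := by
    rw [measure_cyl_eq_sum μ m w]
    have hfil : ∑ a ∈ Finset.filter (fun a => μ (cylSet (m + 1) (Fin.snoc w a)) ≠ 0)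
          Finset.univ, μ (cylSet (m + 1) (Fin.snoc w a))
        = ∑ a : A, μ (cylSet (m + 1) (Fin.snoc w a)) := by
      refine Finset.sum_subset (Finset.filter_subset _ _) ?_
      intro x _ hx
      by_contra hx0
      exact hx (Finset.mem_filter.2 ⟨Finset.mem_univ x, hx0⟩)
    rw [← hfil]
    have hconst : ∀ a ∈ Finset.filter (fun a => μ (cylSet (m + 1) (Fin.snoc w a)) ≠ 0)
          Finset.univ,
        μ (cylSet (m + 1) (Fin.snoc w a)) = 1 / (p1 : ENNReal) := by
      intro a ha
      have ha' : μ (cylSet (m + 1) (Fin.snoc w a)) ≠ 0 := (Finset.mem_filter.1 ha).2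
      exact hunif (m + 1) (by omega) _ ha'
    rw [Finset.sum_congr rfl hconst, Finset.sum_const, ← hk_def, nsmul_eq_mul]
  have heq : (1 : ENNReal) / (pm : ENNReal) = (k : ENNReal) * (1 / (p1 : ENNReal)) := by
    rw [← hsum]
    exact (hunif m hm w hw).symm
  have hR : (1 : ℝ) / (pm : ℝ) = (k : ℝ) * (1 / (p1 : ℝ)) := by
    have := congrArg ENNReal.toReal heq
    simpa [ENNReal.toReal_div, ENNReal.toReal_mul] using this
  have hpmR : (pm : ℝ) ≠ 0 := Nat.cast_ne_zero.2 hpm0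
  have hp1R : (p1 : ℝ) ≠ 0 := Nat.cast_ne_zero.2 hp10
  field_simp at hR
  have hR' : (k : ℝ) * (pm : ℝ) = (p1 : ℝ) := by linarith
  exact_mod_cast hR'

end AuxUOS

/-- **(Uniform finite-dimensional distributions: counting extensions.)**
Let `μ` be a stationary process on `A^ℤ` such that for every `m ≥ 1` the law of
`(ξ_0, …, ξ_{m−1})` is uniform on its support, and let `p_m` be the number of
positive-probability words of length `m`.  Then for every `m ≥ 1`: `p_m` divides
`p_{m+1}`; every positive-probability word `w` of length `m` has exactly
`a_m := p_{m+1}/p_m` one-letter right-extensions of positive probability, each with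
conditional probability `1/a_m`; and `a_{m+1} ≤ a_m`. -/
theorem uniform_on_support_extension_count
    {A : Type*} [Fintype A] [MeasurableSpace A] [DiscreteMeasurableSpace A]
    (μ : Measure (ℤ → A)) [IsProbabilityMeasure μ]
    (hstat : μ.map (shiftT A) = μ)
    (hunif : ∀ m : ℕ, 1 ≤ m → UniformOnSupport μ m) :
    ∀ m : ℕ, 1 ≤ m →
      ((posWords μ m).card ∣ (posWords μ (m + 1)).card) ∧
      (∀ w : Fin m → A, μ (cylSet m w) ≠ 0 →
        ((@Finset.filter A (fun a => μ (cylSet (m + 1) (Fin.snoc w a)) ≠ 0)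
            (Classical.decPred _) Finset.univ).card
          = (posWords μ (m + 1)).card / (posWords μ m).card) ∧
        (∀ a : A, μ (cylSet (m + 1) (Fin.snoc w a)) ≠ 0 →
          μ (cylSet (m + 1) (Fin.snoc w a)) / μ (cylSet m w)
            = 1 / (((posWords μ (m + 1)).card / (posWords μ m).card : ℕ) : ENNReal))) ∧
      ((posWords μ (m + 2)).card / (posWords μ (m + 1)).card ≤
        (posWords μ (m + 1)).card / (posWords μ m).card) := by
  classical
  intro m hm
  have hpm0 : (posWords μ m).card ≠ 0 :=
    Finset.card_ne_zero_of_mem (posWords_nonempty_aux μ m).choose_spec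
  have hp10 : (posWords μ (m + 1)).card ≠ 0 :=
    Finset.card_ne_zero_of_mem (posWords_nonempty_aux μ (m + 1)).choose_spec
  -- divisibility, from any positive word
  obtain ⟨w0, hw0⟩ := posWords_nonempty_aux μ m
  have hw0' : μ (cylSet m w0) ≠ 0 := (mem_posWords_aux μ m w0).1 hw0
  have hkey0 := key_count μ hunif m hm w0 hw0'
  refine ⟨⟨_, hkey0.symm.trans (mul_comm _ _)⟩, ?_, ?_⟩
  · intro w hw
    have hkey := key_count μ hunif m hm w hw
    have hcard : (@Finset.filter A (fun a => μ (cylSet (m + 1) (Fin.snoc w a)) ≠ 0)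
        (Classical.decPred _) Finset.univ).card
        = (posWords μ (m + 1)).card / (posWords μ m).card := by
      rw [← hkey, Nat.mul_div_cancel _ (Nat.pos_of_ne_zero hpm0)]
    refine ⟨hcard, ?_⟩
    intro a ha
    set k := (@Finset.filter A (fun a => μ (cylSet (m + 1) (Fin.snoc w a)) ≠ 0)
        (Classical.decPred _) Finset.univ).card with hk_def
    have hk0 : k ≠ 0 := by
      refine Finset.card_ne_zero_of_mem (a := a) ?_
      simp only [Finset.mem_filter, Finset.mem_univ, true_and]
      exact ha
    rw [← hcard]
    rw [hunif (m + 1) (by omega) _ ha, hunif m hm w hw]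
    -- (1/p1) / (1/pm) = 1/k , where p1 = k * pm
    have hpm' : ((posWords μ m).card : ENNReal) ≠ 0 := Nat.cast_ne_zero.2 hpm0
    have hp1' : ((posWords μ (m + 1)).card : ENNReal) ≠ 0 := Nat.cast_ne_zero.2 hp10
    have hp1eq : ((posWords μ (m + 1)).card : ENNReal)
        = (k : ENNReal) * ((posWords μ m).card : ENNReal) := by
      exact_mod_cast congrArg (Nat.cast : ℕ → ENNReal) hkey.symm
    rw [one_div, one_div, one_div, div_eq_mul_inv, inv_inv, hp1eq,
      ENNReal.mul_inv (Or.inl (Nat.cast_ne_zero.2 hk0)) (Or.inl (ENNReal.natCast_ne_top _)),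
      mul_assoc, ENNReal.inv_mul_cancel hpm' (ENNReal.natCast_ne_top _), mul_one]
  · -- monotonicity
    obtain ⟨w1, hw1⟩ := posWords_nonempty_aux μ (m + 1)
    have hw1' : μ (cylSet (m + 1) w1) ≠ 0 := (mem_posWords_aux μ (m + 1) w1).1 hw1
    set s : Fin m → A := fun i => w1 i.succ with hs_def
    have hs : μ (cylSet m s) ≠ 0 := suffix_pos_aux μ hstat m w1 hw1'
    have hkey1 := key_count μ hunif (m + 1) (by omega) w1 hw1'
    have hkeys := key_count μ hunif m hm s hs
    have hsub : (@Finset.filter A (fun a => μ (cylSet (m + 2) (Fin.snoc w1 a)) ≠ 0)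
          (Classical.decPred _) Finset.univ)
        ⊆ (@Finset.filter A (fun a => μ (cylSet (m + 1) (Fin.snoc s a)) ≠ 0)
          (Classical.decPred _) Finset.univ) := by
      intro b hb
      simp only [Finset.mem_filter, Finset.mem_univ, true_and] at hb ⊢
      have := suffix_pos_aux μ hstat (m + 1) (Fin.snoc w1 b) hb
      have hfun : (fun i : Fin (m + 1) => (Fin.snoc w1 b : Fin (m + 2) → A) i.succ)
          = Fin.snoc s b := by
        funext i
        induction i using Fin.lastCases with
        | last => simp [Fin.succ_last]
        | cast j =>
          rw [Fin.succ_castSucc]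
          simp only [Fin.snoc_castSucc, hs_def]
      rwa [hfun] at this
    have hle : (@Finset.filter A (fun a => μ (cylSet (m + 2) (Fin.snoc w1 a)) ≠ 0)
          (Classical.decPred _) Finset.univ).card
        ≤ (@Finset.filter A (fun a => μ (cylSet (m + 1) (Fin.snoc s a)) ≠ 0)
          (Classical.decPred _) Finset.univ).card := Finset.card_le_card hsub
    have h1 : (posWords μ (m + 2)).card / (posWords μ (m + 1)).card
        = (@Finset.filter A (fun a => μ (cylSet (m + 2) (Fin.snoc w1 a)) ≠ 0)
          (Classical.decPred _) Finset.univ).card := by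
      rw [← hkey1, Nat.mul_div_cancel _ (Nat.pos_of_ne_zero hp10)]
    have h2 : (posWords μ (m + 1)).card / (posWords μ m).card
        = (@Finset.filter A (fun a => μ (cylSet (m + 1) (Fin.snoc s a)) ≠ 0)
          (Classical.decPred _) Finset.univ).card := by
      rw [← hkeys, Nat.mul_div_cancel _ (Nat.pos_of_ne_zero hpm0)]
    rw [h1, h2]
    exact hle
end

section
/- Let (η_m)_{m∈ℕ} be i.i.d. uniform ZMod 2 random variables, and define the block-construction process ξ : ℕ → ZMod 2 by ξ_n := Σ_{m∈D(n)} η_m, where D(n) ⊆ ℕ is the set of integers m such that, for every position k, the k-th ternary digit of m equals the k-th ternary digit d_k(n) of n whenever d_k(n) ∈ {0,1}, and lies in {0,1} whenever d_k(n) = 2 (so that ξ_{2·3^k + j} = ξ_j + ξ_{3^k + j} for all k ≥ 0 and 0 ≤ j < 3^k). Then for every k ≥ 0 and all a ≠ b in ℕ, the two k-blocks (ξ_n)_{a·3^k ≤ n < (a+1)·3^k} and (ξ_n)_{b·3^k ≤ n < (b+1)·3^k} are independent random vectors. -/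
open MeasureTheory ProbabilityTheory
open scoped Classical

/-- The `k`-th ternary digit of `n`. -/
def tdigit (k n : ℕ) : ℕ := n / 3 ^ k % 3

/-- `m ∈ D(n)`: for every position `k`, the `k`-th ternary digit of `m` equals the
`k`-th ternary digit of `n` whenever the latter is `0` or `1`, and lies in `{0,1}`
whenever the latter is `2`. -/
def memD (n m : ℕ) : Prop :=
  ∀ k : ℕ, if tdigit k n = 2 then tdigit k m ≤ 1 else tdigit k m = tdigit k n

/-!
Write an index below `H · 3^k` as `h · 3^k + s` with `s < 3^k`. Digit by digit,
`h · 3^k + s ∈ D(A · 3^k + t)` iff `h ∈ D(A)` and `s ∈ D(t)`, so the `A`-block is a fixed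
function of the vector `ζ_A = (∑_{h ∈ D(A)} η_{h·3^k+s})_{s < 3^k}`. Distinct `a ≠ b` have
distinct sets `D(a) ≠ D(b)`; if `h₀ ∈ D(a) \ D(b)`, the linear map `η ↦ (ζ_a, ζ_b)` is onto:
`ζ_b` is reached through a row `h₁ ∈ D(b)` (never empty), and then the row `h₀` adjusts `ζ_a`
without touching `ζ_b`. A surjective homomorphism carries
the uniform law of `η` to the uniform law on the product, whose two coordinates are
independent.
-/

open Finset

section UniformLaw

variable {α β : Type*} [Fintype α] [MeasurableSpace α] [MeasurableSingletonClass α]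
  [Fintype β] [MeasurableSpace β] [MeasurableSingletonClass β]

theorem uniformOn_univ_singleton (a : α) :
    uniformOn (Set.univ : Set α) {a} = (Fintype.card α : ENNReal)⁻¹ := by
  rw [uniformOn_univ, Measure.count_singleton, one_div]

theorem uniformOn_univ_prod [Nonempty α] [Nonempty β] :
    (uniformOn Set.univ : Measure (α × β)) = (uniformOn Set.univ).prod (uniformOn Set.univ) := by
  refine Measure.ext_of_singleton fun ⟨a, b⟩ => ?_
  rw [← Set.singleton_prod_singleton, Measure.prod_prod, Set.singleton_prod_singleton,
    uniformOn_univ_singleton, uniformOn_univ_singleton, uniformOn_univ_singleton,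
    Fintype.card_prod, Nat.cast_mul, ENNReal.mul_inv (by simp) (by simp)]

theorem pi_uniformOn_univ {ι : Type*} [Fintype ι] {γ : ι → Type*} [∀ i, Fintype (γ i)]
    [∀ i, MeasurableSpace (γ i)] [∀ i, MeasurableSingletonClass (γ i)] [∀ i, Nonempty (γ i)] :
    Measure.pi (fun i => (uniformOn Set.univ : Measure (γ i))) = uniformOn Set.univ := by
  refine Measure.ext_of_singleton fun u => ?_
  rw [← Set.univ_pi_singleton, Measure.pi_pi, Set.univ_pi_singleton, uniformOn_univ_singleton,
    Fintype.card_pi, Nat.cast_prod, ENNReal.prod_inv_distrib]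
  · exact Finset.prod_congr rfl fun i _ => uniformOn_univ_singleton (u i)
  · intro i _ j _ _; simp

theorem map_uniformOn_univ_of_surjective {V W : Type*} [AddGroup V] [Fintype V]
    [MeasurableSpace V] [MeasurableSingletonClass V] [AddGroup W] [Fintype W]
    [MeasurableSpace W] [MeasurableSingletonClass W]
    (L : V →+ W) (hL : Function.Surjective L) :
    (uniformOn Set.univ : Measure V).map L = uniformOn Set.univ := by
  have hfiber : ∀ w w', #{v | L v = w} = #{v | L v = w'} := fun w w' =>
    AddMonoidHom.card_fiber_eq_of_mem_range L (hL w) (hL w')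
  obtain ⟨w₀⟩ : Nonempty W := ⟨0⟩
  have hcard : Fintype.card V = Fintype.card W * #{v | L v = w₀} := by
    rw [← Finset.card_univ, Finset.card_eq_sum_card_fiberwise (fun v _ => Finset.mem_univ (L v)),
      Finset.sum_congr rfl fun w _ => hfiber w w₀, Finset.sum_const, smul_eq_mul, Finset.card_univ]
  refine Measure.ext_of_singleton fun w => ?_
  rw [Measure.map_apply (measurable_of_finite L) (measurableSet_singleton w), uniformOn_univ,
    uniformOn_univ_singleton]
  have hpre : L ⁻¹' {w} = ((Finset.univ.filter fun v => L v = w : Finset V) : Set V) := by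
    ext; simp
  have hpos : (#{v | L v = w₀} : ENNReal) ≠ 0 := by
    obtain ⟨v, hv⟩ := hL w₀
    exact Nat.cast_ne_zero.mpr (Finset.card_ne_zero.mpr ⟨v, by simp [hv]⟩)
  rw [hpre, Measure.count_apply_finset, hfiber w w₀, hcard, Nat.cast_mul,
    ← one_mul (#{v | L v = w₀} : ENNReal), ← mul_assoc, mul_one,
    ENNReal.mul_div_mul_right _ _ hpos (ENNReal.natCast_ne_top _), one_div]

theorem indepFun_of_map_eq_uniformOn_univ [Nonempty α] [Nonempty β]
    {Ω : Type*} [MeasurableSpace Ω] {P : Measure Ω} [IsProbabilityMeasure P]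
    {Z : Ω → α × β} (hZ : Measurable Z) (hunif : P.map Z = uniformOn Set.univ) :
    IndepFun (fun ω => (Z ω).1) (fun ω => (Z ω).2) P := by
  have hfst : P.map (fun ω => (Z ω).1) = uniformOn Set.univ := by
    change P.map (Prod.fst ∘ Z) = _
    rw [← Measure.map_map measurable_fst hZ, hunif, uniformOn_univ_prod, Measure.map_fst_prod,
      measure_univ, one_smul]
  have hsnd : P.map (fun ω => (Z ω).2) = uniformOn Set.univ := by
    change P.map (Prod.snd ∘ Z) = _
    rw [← Measure.map_map measurable_snd hZ, hunif, uniformOn_univ_prod, Measure.map_snd_prod,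
      measure_univ, one_smul]
  rw [indepFun_iff_map_prod_eq_prod_map_map hZ.fst.aemeasurable hZ.snd.aemeasurable, hfst, hsnd,
    ← uniformOn_univ_prod, ← hunif]

theorem map_eq_uniformOn_univ_of_measure_preimage_singleton
    {Ω : Type*} [MeasurableSpace Ω] {P : Measure Ω} {X : Ω → α} (hX : Measurable X)
    (h : ∀ a, P (X ⁻¹' {a}) = (Fintype.card α : ENNReal)⁻¹) :
    P.map X = uniformOn Set.univ :=
  Measure.ext_of_singleton fun a => by
    rw [Measure.map_apply hX (measurableSet_singleton a), h, uniformOn_univ_singleton]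

end UniformLaw

theorem map_pi_eq_uniformOn_univ_of_iIndepFun {Ω : Type*} [MeasurableSpace Ω] {P : Measure Ω}
    [IsProbabilityMeasure P] {ι : Type*} [Fintype ι] {γ : ι → Type*} [∀ i, Fintype (γ i)]
    [∀ i, MeasurableSpace (γ i)] [∀ i, MeasurableSingletonClass (γ i)] [∀ i, Nonempty (γ i)]
    {X : (i : ι) → Ω → γ i} (hX : ∀ i, Measurable (X i)) (hindep : iIndepFun X P)
    (hunif : ∀ i, P.map (X i) = uniformOn Set.univ) :
    P.map (fun ω i => X i ω) = uniformOn Set.univ := by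
  rw [(iIndepFun_iff_map_fun_eq_pi_map fun i => (hX i).aemeasurable).mp hindep]
  simp_rw [hunif]
  exact pi_uniformOn_univ

def sumFst {H S R : Type*} [AddCommMonoid R] (A : Finset H) : (H × S → R) →+ (S → R) where
  toFun v s := ∑ h ∈ A, v (h, s)
  map_zero' := by ext; simp
  map_add' v w := by ext; simp [Finset.sum_add_distrib]

theorem sumFst_prod_sumFst_surjective {H S R : Type*} [DecidableEq H] [AddCommGroup R]
    {A B : Finset H} {h₀ h₁ : H} (h₀A : h₀ ∈ A) (h₀B : h₀ ∉ B) (h₁B : h₁ ∈ B) :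
    Function.Surjective ((sumFst A).prod (sumFst B) : (H × S → R) →+ (S → R) × (S → R)) := by
  rintro ⟨x, y⟩
  refine ⟨fun p => (if p.1 = h₁ then y p.2 else 0) +
    (if p.1 = h₀ then x p.2 - (if h₁ ∈ A then y p.2 else 0) else 0), ?_⟩
  ext s <;> simp [sumFst, Finset.sum_add_distrib, h₀A, h₀B, h₁B]

theorem tdigit_lt (k n : ℕ) : tdigit k n < 3 := Nat.mod_lt _ (by norm_num)

theorem tdigit_add (i K n : ℕ) : tdigit (i + K) n = tdigit i (n / 3 ^ K) := by
  rw [tdigit, tdigit, pow_add, mul_comm, Nat.div_div_eq_div_mul]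

theorem tdigit_eq_zero_of_lt {k n : ℕ} (h : n < 3 ^ k) : tdigit k n = 0 := by
  simp [tdigit, Nat.div_eq_of_lt h]

theorem tdigit_mod_pow {k K : ℕ} (hk : k < K) (n : ℕ) : tdigit k (n % 3 ^ K) = tdigit k n := by
  have hK : 3 ^ K = 3 ^ k * 3 ^ (K - k) := by rw [← pow_add, Nat.add_sub_cancel' hk.le]
  rw [tdigit, tdigit, hK, Nat.mod_mul_right_div_self,
    Nat.mod_mod_of_dvd _ (dvd_pow_self 3 (by omega))]

theorem le_of_tdigit_le {m n : ℕ} (h : ∀ k, tdigit k m ≤ tdigit k n) : m ≤ n := by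
  induction m using Nat.strong_induction_on generalizing n with
  | _ m ih =>
    rcases Nat.eq_zero_or_pos m with rfl | hm
    · exact Nat.zero_le n
    have hdiv : m / 3 ≤ n / 3 := ih _ (Nat.div_lt_self hm (by norm_num)) fun k => by
      simpa only [tdigit_add, pow_one] using h (k + 1)
    have hmod : m % 3 ≤ n % 3 := by simpa [tdigit] using h 0
    omega

theorem exists_tdigit_eq (L : ℕ) (c : ℕ → ℕ) (hc : ∀ k, c k < 3) (hL : ∀ k, L ≤ k → c k = 0) :
    ∃ m, ∀ k, tdigit k m = c k := by
  induction L generalizing c with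
  | zero => exact ⟨0, fun k => by simp [tdigit, hL k (Nat.zero_le k)]⟩
  | succ L ih =>
    obtain ⟨m, hm⟩ := ih (fun k => c (k + 1)) (fun k => hc _) fun k hk => hL _ (by omega)
    refine ⟨c 0 + 3 * m, fun k => ?_⟩
    cases k with
    | zero => have := hc 0; simp [tdigit]; omega
    | succ k =>
      rw [tdigit_add, pow_one, show (c 0 + 3 * m) / 3 = m by have := hc 0; omega, hm]

theorem exists_memD_tdigit_eq (n : ℕ) (x : ℕ → ℕ) (hx : ∀ k, x k ≤ 1) :
    ∃ m, memD n m ∧ ∀ k, tdigit k n = 2 → tdigit k m = x k := by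
  obtain ⟨m, hm⟩ := exists_tdigit_eq n (fun k => if tdigit k n = 2 then x k else tdigit k n)
    (fun k => by have := hx k; have := tdigit_lt k n; split <;> omega)
    (fun k hk => by
      rw [tdigit_eq_zero_of_lt ((Nat.lt_pow_self (by norm_num)).trans_le
        (Nat.pow_le_pow_right (by norm_num) hk))]; simp)
  refine ⟨m, fun k => ?_, fun k hk => by simp [hm, hk]⟩
  have := hx k
  simp only [hm]
  split <;> simp_all

theorem memD_le {n m : ℕ} (h : memD n m) : m ≤ n :=
  le_of_tdigit_le fun k => by have := h k; split at this <;> omega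

theorem memD_iff_div_mod (K n m : ℕ) :
    memD n m ↔ memD (n / 3 ^ K) (m / 3 ^ K) ∧ memD (n % 3 ^ K) (m % 3 ^ K) := by
  have hhigh : ∀ {x}, x % 3 ^ K < 3 ^ K := Nat.mod_lt _ (by positivity)
  have hzero : ∀ {k x}, K ≤ k → tdigit k (x % 3 ^ K) = 0 := fun hk =>
    tdigit_eq_zero_of_lt (hhigh.trans_le (Nat.pow_le_pow_right (by norm_num) hk))
  constructor
  · intro h
    refine ⟨fun i => by simpa only [tdigit_add] using h (i + K), fun k => ?_⟩
    rcases lt_or_ge k K with hk | hk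
    · simpa only [tdigit_mod_pow hk] using h k
    · simp [hzero hk]
  · rintro ⟨hdiv, hmod⟩ k
    rcases lt_or_ge k K with hk | hk
    · simpa only [tdigit_mod_pow hk] using hmod k
    · obtain ⟨i, rfl⟩ := Nat.exists_eq_add_of_le' hk
      simpa only [tdigit_add] using hdiv i

theorem memD_mul_pow_add {K A t h s : ℕ} (ht : t < 3 ^ K) (hs : s < 3 ^ K) :
    memD (A * 3 ^ K + t) (h * 3 ^ K + s) ↔ memD A h ∧ memD t s := by
  have hdiv : ∀ {x y}, y < 3 ^ K → (x * 3 ^ K + y) / 3 ^ K = x := fun hy => by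
    rw [add_comm, Nat.add_mul_div_right _ _ (by positivity), Nat.div_eq_of_lt hy, zero_add]
  rw [memD_iff_div_mod K, hdiv ht, hdiv hs]
  simp only [Nat.mul_add_mod_self_right, Nat.mod_eq_of_lt, ht, hs]

theorem sum_range_memD_mul_pow_add {M : Type*} [AddCommMonoid M] {K A H t : ℕ} (hA : A < H)
    (ht : t < 3 ^ K) (w : ℕ → M) :
    ∑ m ∈ range (A * 3 ^ K + t + 1), (if memD (A * 3 ^ K + t) m then w m else 0) =
      ∑ s : Fin (3 ^ K), if memD t s then
        ∑ h ∈ univ.filter (fun h : Fin H => memD A h), w (finProdFinEquiv (h, s)) else 0 := by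
  have hlt : A * 3 ^ K + t + 1 ≤ H * 3 ^ K := by
    have : (A + 1) * 3 ^ K ≤ H * 3 ^ K := Nat.mul_le_mul_right _ hA
    rw [add_mul, one_mul] at this; omega
  rw [Finset.sum_subset (range_subset_range.mpr hlt) fun m _ hm => if_neg fun hD =>
      hm (mem_range.mpr (Nat.lt_succ_of_le (memD_le hD))),
    Finset.sum_range, ← finProdFinEquiv.sum_comp, Fintype.sum_prod_type, Finset.sum_comm]
  refine Finset.sum_congr rfl fun s _ => ?_
  simp_rw [finProdFinEquiv_apply_val, show ∀ h : Fin H, (s : ℕ) + 3 ^ K * h = h * 3 ^ K + s from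
    fun h => by ring, memD_mul_pow_add ht s.isLt, ite_and]
  split_ifs <;> simp [Finset.sum_filter]

theorem exists_memD_not_memD {a b j : ℕ} (hj : tdigit j a ≠ tdigit j b) (hb : tdigit j b ≠ 2) :
    ∃ h, memD a h ∧ ¬ memD b h := by
  obtain ⟨h, ha, hdig⟩ := exists_memD_tdigit_eq a (fun _ => 1 - tdigit j b) fun _ => by omega
  refine ⟨h, ha, fun hbh => ?_⟩
  have hbj := hbh j
  have haj := ha j
  rw [if_neg hb] at hbj
  by_cases ha2 : tdigit j a = 2
  · have := hdig j ha2
    have := tdigit_lt j b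
    omega
  · rw [if_neg ha2] at haj
    omega

theorem exists_memD_xor {a b : ℕ} (hab : a ≠ b) : ∃ h, Xor (memD a h) (memD b h) := by
  obtain ⟨j, hj⟩ : ∃ j, tdigit j a ≠ tdigit j b := by
    by_contra! h
    exact hab (le_antisymm (le_of_tdigit_le fun k => (h k).le) (le_of_tdigit_le fun k => (h k).ge))
  by_cases hb : tdigit j b = 2
  · obtain ⟨h, hbh, hah⟩ := exists_memD_not_memD (Ne.symm hj) (hb ▸ hj)
    exact ⟨h, Or.inr ⟨hbh, hah⟩⟩
  · obtain ⟨h, hah, hbh⟩ := exists_memD_not_memD hj hb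
    exact ⟨h, Or.inl ⟨hah, hbh⟩⟩

theorem indepFun_blocks_of_memD_of_not_memD {Ω : Type*} [MeasurableSpace Ω] {P : Measure Ω}
    [IsProbabilityMeasure P] {η : ℕ → Ω → ZMod 2} (hηmeas : ∀ m, Measurable (η m))
    (hηindep : iIndepFun η P) (hηunif : ∀ m, P.map (η m) = uniformOn Set.univ)
    {ξ : ℕ → Ω → ZMod 2}
    (hξ : ∀ n ω, ξ n ω = ∑ m ∈ range (n + 1), if memD n m then η m ω else 0)
    (k : ℕ) {a b h₀ : ℕ} (ha₀ : memD a h₀) (hb₀ : ¬ memD b h₀) :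
    IndepFun (fun ω (t : Fin (3 ^ k)) => ξ (a * 3 ^ k + t) ω)
      (fun ω (t : Fin (3 ^ k)) => ξ (b * 3 ^ k + t) ω) P := by
  let H := max a b + 1
  obtain ⟨h₁, hb₁, -⟩ := exists_memD_tdigit_eq b 0 fun _ => zero_le_one
  let Y : Ω → Fin H × Fin (3 ^ k) → ZMod 2 := fun ω p => η (finProdFinEquiv p) ω
  have hYmeas : Measurable Y := measurable_pi_lambda _ fun p => hηmeas _
  have hY : P.map Y = uniformOn Set.univ := map_pi_eq_uniformOn_univ_of_iIndepFun
    (fun p => hηmeas _) (hηindep.precomp (Fin.val_injective.comp finProdFinEquiv.injective))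
    fun p => hηunif _
  let D : ℕ → Finset (Fin H) := fun A => univ.filter fun h => memD A h
  let G : (Fin (3 ^ k) → ZMod 2) → Fin (3 ^ k) → ZMod 2 :=
    fun z t => ∑ s : Fin (3 ^ k), if memD t s then z s else 0
  have hblock : ∀ A < H, (fun ω (t : Fin (3 ^ k)) => ξ (A * 3 ^ k + t) ω) =
      G ∘ sumFst (D A) ∘ Y := fun A hA => by
    ext ω t
    simp only [hξ, sum_range_memD_mul_pow_add hA t.isLt]
    rfl
  have hh₀ : h₀ < H := by have := memD_le ha₀; omega
  have hh₁ : h₁ < H := by have := memD_le hb₁; omega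
  let L : (Fin H × Fin (3 ^ k) → ZMod 2) →+ (Fin (3 ^ k) → ZMod 2) × (Fin (3 ^ k) → ZMod 2) :=
    (sumFst (D a)).prod (sumFst (D b))
  have hL : Function.Surjective L := sumFst_prod_sumFst_surjective (h₀ := ⟨h₀, hh₀⟩)
    (h₁ := ⟨h₁, hh₁⟩) (by simpa [D] using ha₀) (by simpa [D] using hb₀) (by simpa [D] using hb₁)
  have hLY : IndepFun (sumFst (D a) ∘ Y) (sumFst (D b) ∘ Y) P :=
    indepFun_of_map_eq_uniformOn_univ (Z := L ∘ Y) ((measurable_of_finite L).comp hYmeas) (by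
      rw [← Measure.map_map (measurable_of_finite L) hYmeas, hY,
        map_uniformOn_univ_of_surjective L hL])
  rw [hblock a (by omega), hblock b (by omega)]
  exact hLY.comp (measurable_of_finite G) (measurable_of_finite G)

/-- **(Independence of distinct `k`-blocks in the block construction.)**
Let `(η_m)_{m∈ℕ}` be i.i.d. uniform `ZMod 2` random variables and let the
block-construction process be `ξ_n := Σ_{m ∈ D(n)} η_m` (where `D(n) ⊆ {0,…,n}` is the
set of indices described above, so that `ξ_{2·3^k+j} = ξ_j + ξ_{3^k+j}` for all `k ≥ 0`
and `0 ≤ j < 3^k`).  Then for every `k ≥ 0` and all `a ≠ b`, the two `k`-blocks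
`(ξ_n)_{a·3^k ≤ n < (a+1)·3^k}` and `(ξ_n)_{b·3^k ≤ n < (b+1)·3^k}` are independent
random vectors. -/
theorem block_construction_blocks_independent
    {Ω : Type*} [MeasurableSpace Ω] (P : Measure Ω) [IsProbabilityMeasure P]
    (η : ℕ → Ω → ZMod 2)
    (hηmeas : ∀ m, Measurable (η m))
    (hηindep : iIndepFun η P)
    (hηunif : ∀ (m : ℕ) (c : ZMod 2), P {ω | η m ω = c} = 1 / 2)
    (ξ : ℕ → Ω → ZMod 2)
    (hξ : ∀ (n : ℕ) (ω : Ω),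
      ξ n ω = ∑ m ∈ Finset.range (n + 1), if memD n m then η m ω else 0)
    (k : ℕ) (a b : ℕ) (hab : a ≠ b) :
    IndepFun (fun ω (t : Fin (3 ^ k)) => ξ (a * 3 ^ k + (t : ℕ)) ω)
      (fun ω (t : Fin (3 ^ k)) => ξ (b * 3 ^ k + (t : ℕ)) ω) P := by
  have hunif : ∀ m, P.map (η m) = uniformOn Set.univ := fun m =>
    map_eq_uniformOn_univ_of_measure_preimage_singleton (hηmeas m) fun c => by
      rw [ZMod.card, ← one_div]
      exact hηunif m c
  obtain ⟨h₀, ⟨ha, hb⟩ | ⟨hb, ha⟩⟩ := exists_memD_xor hab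
  · exact indepFun_blocks_of_memD_of_not_memD hηmeas hηindep hunif hξ k ha hb
  · exact (indepFun_blocks_of_memD_of_not_memD hηmeas hηindep hunif hξ k hb ha).symm
end
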